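/- arXiv:1510.04193 — 10 statements merged into one kernel-verified Lean document; each statement's English description precedes it below -/
import Mathlib

section
/- Let 0 < a < b be real numbers and let b₁, …, bₙ > 0 with b = b₁ + ⋯ + bₙ. Then there is a real r > 0 (one may take r = (b − a)/n) with the following property: for every m and all reals a₁, …, a_m with 0 < aᵢ ≤ r for each i and a₁ + ⋯ + a_m = a, there exist pairwise disjoint (possibly empty) sets I₁, …, Iₙ with I₁ ∪ ⋯ ∪ Iₙ = {1, …, m} such that for every k = 1, …, n one has ∑_{i ∈ I_k} aᵢ < b_k. -/
open Finset

/-! Pour the amphorae into the barrels one at a time, each into a barrel with free room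
exceeding `r`. Such a barrel exists as long as the amount already poured plus `n * r` is less
than the total capacity `b`; with `r = (b - a) / n` this holds until all of `a` is poured. -/

lemma exists_sum_fiber_add_lt {ι κ : Type*} [Fintype κ] [DecidableEq κ] (s : Finset ι)
    (f : ι → κ) (A : ι → ℝ) (C : κ → ℝ) {r : ℝ}
    (h : ∑ i ∈ s, A i + Fintype.card κ * r < ∑ k, C k) :
    ∃ k, ∑ i ∈ s with f i = k, A i + r < C k := by
  have hsum : ∑ k, (∑ i ∈ s with f i = k, A i + r) < ∑ k, C k := by
    rwa [sum_add_distrib, sum_fiberwise, sum_const, card_univ, nsmul_eq_mul]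
  obtain ⟨k, -, hk⟩ := exists_lt_of_sum_lt hsum
  exact ⟨k, hk⟩

lemma exists_assignment_sum_fiber_lt {ι κ : Type*} [Fintype κ] [Nonempty κ] [DecidableEq κ]
    (s : Finset ι) (A : ι → ℝ) (C : κ → ℝ) {r : ℝ} (hA_pos : ∀ i ∈ s, 0 < A i)
    (hA_le : ∀ i ∈ s, A i ≤ r) (hC : ∀ k, 0 < C k)
    (h : ∑ i ∈ s, A i + Fintype.card κ * r ≤ ∑ k, C k) :
    ∃ f : ι → κ, ∀ k, ∑ i ∈ s with f i = k, A i < C k := by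
  classical
  induction s using Finset.induction_on with
  | empty => exact ⟨fun _ => Classical.arbitrary κ, by simpa using hC⟩
  | insert i s hi ih =>
    rw [sum_insert hi] at h
    have hAi := hA_pos i (mem_insert_self i s)
    obtain ⟨f, hf⟩ := ih (fun j hj => hA_pos j (mem_insert_of_mem hj))
      (fun j hj => hA_le j (mem_insert_of_mem hj)) (by linarith)
    obtain ⟨k, hk⟩ := exists_sum_fiber_add_lt s f A C (r := r) (by linarith)
    refine ⟨Function.update f i k, fun l => ?_⟩
    have hfiber :
        ∑ j ∈ s with Function.update f i k j = l, A j = ∑ j ∈ s with f j = l, A j := by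
      refine sum_congr (filter_congr fun j hj => ?_) fun _ _ => rfl
      rw [Function.update_of_ne (ne_of_mem_of_not_mem hj hi)]
    rw [filter_insert, Function.update_self]
    split_ifs with hkl
    · subst hkl
      rw [sum_insert (fun hmem => hi (mem_filter.mp hmem).1), hfiber]
      linarith [hA_le i (mem_insert_self i s)]
    · rw [hfiber]
      exact hf l

/-- **The amphorae-into-barrels lemma, part (a).**
Given `0 < a < b` and positive reals `b₁, …, bₙ` summing to `b`, there is `r > 0`
such that any finite family of positive reals `a₁, …, a_m`, each `≤ r`, summing to `a`,
can be split into pairwise disjoint (possibly empty) sets `I₁ ∪ ⋯ ∪ Iₙ = {1, …, m}`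
with `∑_{i ∈ I_k} aᵢ < b_k` for every `k`. -/
theorem stmt_1 (a b : ℝ) (ha : 0 < a) (hab : a < b)
    (n : ℕ) (B : Fin n → ℝ) (hB : ∀ k, 0 < B k) (hBsum : ∑ k, B k = b) :
    ∃ r > (0 : ℝ), ∀ (m : ℕ) (A : Fin m → ℝ),
      (∀ i, 0 < A i) → (∀ i, A i ≤ r) → ∑ i, A i = a →
      ∃ I : Fin n → Finset (Fin m),
        (∀ k l, k ≠ l → Disjoint (I k) (I l)) ∧
        (∀ i : Fin m, ∃ k, i ∈ I k) ∧
        (∀ k, ∑ i ∈ I k, A i < B k) := by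
  have hn : 0 < n := by
    refine Nat.pos_of_ne_zero fun hn => ?_
    subst hn
    simp only [univ_eq_empty, sum_empty] at hBsum
    linarith
  have : NeZero n := ⟨hn.ne'⟩
  have hr : 0 < (b - a) / n := div_pos (by linarith) (by exact_mod_cast hn)
  refine ⟨(b - a) / n, hr, fun m A hA_pos hA_le hA_sum => ?_⟩
  obtain ⟨f, hf⟩ := exists_assignment_sum_fiber_lt univ A B (r := (b - a) / n)
    (fun i _ => hA_pos i) (fun i _ => hA_le i) hB
    (by rw [hA_sum, hBsum, Fintype.card_fin, mul_div_cancel₀ _ (by positivity)]; linarith)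
  refine ⟨fun k => {i | f i = k}, fun k l hkl => ?_, fun i => ⟨f i, by simp⟩, hf⟩
  exact disjoint_filter.mpr fun i _ hk hl => hkl (hk ▸ hl)
end

section
/- Let 0 < A < B be real numbers and let A₁, …, A_N > 0 with A = A₁ + ⋯ + A_N. Then there is a real R > 0 (for N ≥ 2 one may take R = (B − A)/(N − 1)) with the following property: for every M and all reals B₁, …, B_M with 0 < B_j ≤ R for each j and B₁ + ⋯ + B_M = B, there exist natural numbers 0 = j₀ < j₁ < ⋯ < j_N = M such that, setting J_k = {j_{k−1}+1, …, j_k}, for every k = 1, …, N one has A_k < ∑_{j ∈ J_k} B_j. -/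
open Finset

/-!
Let `S n = B₀ + ⋯ + B_{n-1}` and put thresholds `t k = A₀ + ⋯ + A_{k-1} + k R` with
`R = (B - A) / N`, so that `t N = B`. Since `S` climbs in steps of at most `R`, it enters every
window `[t k, t k + R)`; cut at such an entry `j k`. Then the `k`-th block has sum
`S (j (k+1)) - S (j k) > t (k+1) - (t k + R) = A k`.
-/

theorem exists_mem_Ico_of_step_le {S : ℕ → ℝ} {t R : ℝ} {M : ℕ}
    (hstep : ∀ n < M, S (n + 1) ≤ S n + R) (h0 : S 0 < t + R) (hM : t ≤ S M) :
    ∃ n ≤ M, t ≤ S n ∧ S n < t + R := by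
  classical
  have hex : ∃ n, t ≤ S n := ⟨M, hM⟩
  refine ⟨Nat.find hex, Nat.find_min' hex hM, Nat.find_spec hex, ?_⟩
  rcases hn : Nat.find hex with _ | m
  · exact h0
  · have hbelow : S m < t := not_le.mp (Nat.find_min hex (by omega))
    have hmM : m < M := by have := Nat.find_min' hex hM; omega
    linarith [hstep m hmM]

theorem sum_range_sub_sum_range_le_sum_Ico {f : ℕ → ℝ} {M a b : ℕ}
    (hf : ∀ i < M, 0 ≤ f i) (ha : a ≤ M) :
    ∑ i ∈ range b, f i - ∑ i ∈ range a, f i ≤ ∑ i ∈ Ico a b, f i := by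
  rcases le_total a b with hab | hba
  · exact (sum_Ico_eq_sub f hab).ge
  · have hnonneg : 0 ≤ ∑ i ∈ Ico b a, f i :=
      sum_nonneg fun i hi => hf i (by have := (mem_Ico.mp hi).2; omega)
    rw [Ico_eq_empty_of_le hba, sum_empty, sub_nonpos, ← sub_nonneg,
      ← sum_Ico_eq_sub f hba]
    exact hnonneg

theorem exists_cuts_between_thresholds {S t : ℕ → ℝ} {R : ℝ} {N M : ℕ} (hN : 0 < N)
    (hR : 0 < R) (hstep : ∀ n < M, S (n + 1) ≤ S n + R) (hS0 : S 0 = t 0)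
    (hlow : ∀ k < N, S 0 < t k + R) (hhigh : ∀ k ≤ N, t k ≤ S M) :
    ∃ j : ℕ → ℕ, j 0 = 0 ∧ j N = M ∧
      ∀ k ≤ N, j k ≤ M ∧ t k ≤ S (j k) ∧ (k < N → S (j k) < t k + R) := by
  choose! g hgM hg using fun k (hk : k < N) =>
    exists_mem_Ico_of_step_le hstep (hlow k hk) (hhigh k hk.le)
  refine ⟨fun k => if k = 0 then 0 else if k = N then M else g k, by simp,
    by simp [hN.ne'], fun k hk => ?_⟩
  by_cases hk0 : k = 0
  · subst hk0
    simp only [if_true]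
    exact ⟨Nat.zero_le M, hS0.ge, fun _ => by linarith⟩
  by_cases hkN : k = N
  · subst hkN
    simp only [hk0, if_false, if_true]
    exact ⟨le_rfl, hhigh k le_rfl, fun h => absurd h (lt_irrefl k)⟩
  have hk : k < N := lt_of_le_of_ne hk hkN
  simp only [hk0, hkN, if_false]
  exact ⟨hgM k hk, (hg k hk).1, fun _ => (hg k hk).2⟩

theorem exists_consecutive_blocks_lt_sum {a f : ℕ → ℝ} {R : ℝ} {N M : ℕ} (hN : 0 < N)
    (hR : 0 < R) (ha : ∀ k < N, 0 ≤ a k) (hf : ∀ i < M, 0 ≤ f i)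
    (hfR : ∀ i < M, f i ≤ R)
    (hsum : ∑ k ∈ range N, a k + N * R ≤ ∑ i ∈ range M, f i) :
    ∃ j : ℕ → ℕ, j 0 = 0 ∧ j N = M ∧ (∀ k < N, j k < j (k + 1)) ∧
      ∀ k < N, a k < ∑ i ∈ Ico (j k) (j (k + 1)), f i := by
  set S : ℕ → ℝ := fun n => ∑ i ∈ range n, f i
  set t : ℕ → ℝ := fun k => ∑ i ∈ range k, a i + k * R
  have ht_succ (k : ℕ) : t (k + 1) = t k + a k + R := by
    simp only [t, sum_range_succ]; push_cast; ring
  have ht_nonneg (k : ℕ) (hk : k ≤ N) : 0 ≤ t k :=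
    add_nonneg (sum_nonneg fun i hi => ha i (by have := mem_range.mp hi; omega))
      (by positivity)
  have ht_le (k : ℕ) (hk : k ≤ N) : t k ≤ t N := by
    have hpart : ∑ i ∈ range k, a i ≤ ∑ i ∈ range N, a i :=
      sum_le_sum_of_subset_of_nonneg (range_subset_range.mpr hk)
        fun i hi _ => ha i (mem_range.mp hi)
    have hkR : (k : ℝ) * R ≤ N * R := by gcongr
    exact add_le_add hpart hkR
  obtain ⟨j, hj0, hjN, hj⟩ := exists_cuts_between_thresholds (S := S) (t := t) hN hR
    (fun n hn => by simp only [S, sum_range_succ]; linarith [hfR n hn]) (by simp [S, t])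
    (fun k hk => by simp only [S, range_zero, sum_empty]; linarith [ht_nonneg k hk.le])
    (fun k hk => (ht_le k hk).trans hsum)
  have hblock (k : ℕ) (hk : k < N) : a k < ∑ i ∈ Ico (j k) (j (k + 1)), f i := by
    obtain ⟨hjkM, -, hjk_upper⟩ := hj k hk.le
    have hjk_lower := (hj (k + 1) hk).2.1
    have := sum_range_sub_sum_range_le_sum_Ico (b := j (k + 1)) hf hjkM
    linarith [hjk_upper hk, ht_succ k]
  refine ⟨j, hj0, hjN, fun k hk => ?_, hblock⟩
  by_contra! hle
  have := hblock k hk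
  rw [Ico_eq_empty_of_le hle, sum_empty] at this
  linarith [ha k hk]

-- The `B_j` are indexed from `0`, so the `k`-th block `J_{k+1}` is `Ico (j k) (j (k + 1))`.
/-- **The amphorae-into-barrels lemma, part (b).**
Given `0 < A < B` and positive reals `A₁, …, A_N` summing to `A`, there is `R > 0` such
that any finite family of positive reals `B₁, …, B_M`, each `≤ R`, summing to `B`,
can be split into consecutive nonempty blocks `J_k = {j_{k-1}+1, …, j_k}` (with
`0 = j₀ < j₁ < ⋯ < j_N = M`) such that `A_k < ∑_{j ∈ J_k} B_j` for every `k`.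
(Here the `B_j` are indexed by `0, …, M-1`, so the `k`-th block is `[j_{k-1}, j_k)`.) -/
theorem stmt_2 (A B : ℝ) (hA : 0 < A) (hAB : A < B)
    (N : ℕ) (As : Fin N → ℝ) (hAs : ∀ k, 0 < As k) (hAsum : ∑ k, As k = A) :
    ∃ R > (0 : ℝ), ∀ (M : ℕ) (Bs : ℕ → ℝ),
      (∀ j < M, 0 < Bs j) → (∀ j < M, Bs j ≤ R) →
      (∑ j ∈ Finset.range M, Bs j = B) →
      ∃ j : ℕ → ℕ, j 0 = 0 ∧ j N = M ∧ (∀ k < N, j k < j (k + 1)) ∧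
        ∀ k : Fin N, As k < ∑ i ∈ Finset.Ico (j k) (j (k + 1)), Bs i := by
  have hN : 0 < N := Nat.pos_of_ne_zero fun hN => by
    subst hN; simp only [univ_eq_empty, sum_empty] at hAsum; linarith
  have hNR : (0 : ℝ) < N := by exact_mod_cast hN
  set a : ℕ → ℝ := fun k => if h : k < N then As ⟨k, h⟩ else 0
  have ha_sum : ∑ k ∈ range N, a k = A := by
    rw [← hAsum, sum_range]
    exact sum_congr rfl fun k _ => by simp [a]
  refine ⟨(B - A) / N, div_pos (by linarith) hNR, fun M Bs hBpos hBle hBsum => ?_⟩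
  obtain ⟨j, hj0, hjN, hjmono, hblock⟩ := exists_consecutive_blocks_lt_sum (a := a) hN
    (div_pos (by linarith) hNR) (fun k hk => by simp [a, hk, (hAs _).le])
    (fun i hi => (hBpos i hi).le) hBle (by rw [ha_sum, hBsum]; field_simp; linarith)
  exact ⟨j, hj0, hjN, hjmono, fun k => by simpa [a] using hblock k k.isLt⟩
end

section
/- Let (X,d) be a metric space with a Borel measure μ such that every open ball has finite μ-measure, and suppose μ is continuous, i.e. for every x ∈ X the map r ↦ μ(B(x,r)) from [0,∞) to [0,∞) is continuous (with the convention B(x,0) = ∅). Then the ball map is continuous into the measure algebra: for every x ∈ X, r ≥ 0 and ε > 0 there is δ > 0 such that for all x' ∈ X and r' ≥ 0, if d(x,x') < δ and |r − r'| < δ then μ(B(x,r) △ B(x',r')) < ε. In particular the map (x,r) ↦ μ(B(x,r)) is continuous on X × [0,∞). -/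
/-!
A ball `B(x',r')` with `d(x,x') + |r - r'| ≤ t` differs from `B(x,r)` only inside the annulus
`B(x,r+t) \ B(x,r-t)`, whose measure is `μ(B(x,r+t)) - μ(B(x,max(r-t,0)))` and tends to `0` as
`t → 0⁺` by continuity of `s ↦ μ(B(x,s))` at `r`. Continuity of `(x,r) ↦ μ(B(x,r))` follows from
`|μ A - μ B| ≤ μ(A ∆ B)`.
-/

open MeasureTheory Metric Set Filter Topology
open scoped symmDiff

section Balls

variable {X : Type*}

lemma Metric.symmDiff_ball_subset_ball_sdiff_ball [PseudoMetricSpace X] {x x' : X}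
    {r r' t : ℝ} (h : dist x x' + |r - r'| ≤ t) :
    ball x r ∆ ball x' r' ⊆ ball x (r + t) \ ball x (r - t) := by
  intro y hy
  have := dist_triangle y x x'
  have := dist_triangle_right y x x'
  have := le_abs_self (r - r')
  have := neg_abs_le (r - r')
  have := dist_nonneg (x := x) (y := x')
  simp only [Set.mem_symmDiff, Set.mem_sdiff, mem_ball, not_lt] at hy ⊢
  rcases hy with hy | hy <;> constructor <;> linarith

variable [PseudoMetricSpace X] [MeasurableSpace X] [OpensMeasurableSpace X] {μ : Measure X}

lemma tendsto_measureReal_ball_sdiff_ball {x : X} {r : ℝ} (hr : 0 ≤ r)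
    (hfin : ∀ s, μ (ball x s) ≠ ⊤) (hcont : ContinuousOn (fun s => μ.real (ball x s)) (Ici 0)) :
    Tendsto (fun t => μ.real (ball x (r + t) \ ball x (r - t))) (𝓝[≥] 0) (𝓝 0) := by
  set f := fun s => μ.real (ball x s)
  have hball : ∀ s, ball x s = ball x (max s 0) := fun s => by
    rcases le_total s 0 with hs | hs
    · rw [max_eq_right hs, ball_eq_empty.mpr hs, ball_zero]
    · rw [max_eq_left hs]
  have hannulus : ∀ t ∈ Ici (0 : ℝ),
      f (r + t) - f (max (r - t) 0) = μ.real (ball x (r + t) \ ball x (r - t)) := by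
    intro t (ht : 0 ≤ t)
    rw [measureReal_sdiff (ball_subset_ball (by linarith)) measurableSet_ball (hfin _),
      hball (r - t)]
  have hcont' : ContinuousWithinAt (fun t => f (r + t) - f (max (r - t) 0)) (Ici 0) 0 := by
    refine ContinuousWithinAt.sub ?_ ?_
    · exact (hcont _ (by simp [hr])).comp (by fun_prop)
        fun t (ht : 0 ≤ t) => mem_Ici.mpr (by linarith)
    · exact (hcont _ (by simp [hr])).comp (by fun_prop)
        fun _ _ => mem_Ici.mpr (le_max_right _ _)
  simpa [max_eq_left hr] using (hcont'.tendsto.congr' (eventually_nhdsWithin_of_forall hannulus))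

lemma exists_forall_measureReal_symmDiff_ball_lt {x : X} {r ε : ℝ} (hr : 0 ≤ r) (hε : 0 < ε)
    (hfin : ∀ s, μ (ball x s) ≠ ⊤) (hcont : ContinuousOn (fun s => μ.real (ball x s)) (Ici 0)) :
    ∃ δ > 0, ∀ x' r', dist x x' < δ → |r - r'| < δ → μ.real (ball x r ∆ ball x' r') < ε := by
  have hsmall := (tendsto_measureReal_ball_sdiff_ball hr hfin hcont).eventually (gt_mem_nhds hε)
  obtain ⟨t, htε, ht⟩ :=
    (hsmall.filter_mono (nhdsWithin_mono _ Ioi_subset_Ici_self) |>.and self_mem_nhdsWithin).exists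
  refine ⟨t / 2, half_pos ht, fun x' r' hx hr' => ?_⟩
  calc μ.real (ball x r ∆ ball x' r')
      ≤ μ.real (ball x (r + t) \ ball x (r - t)) :=
        measureReal_mono (symmDiff_ball_subset_ball_sdiff_ball (by linarith))
          (measure_ne_top_of_subset sdiff_subset (hfin _))
    _ < ε := htε

lemma continuousOn_measureReal_ball (hfin : ∀ x r, μ (ball x r) ≠ ⊤)
    (hcont : ∀ x, ContinuousOn (fun s => μ.real (ball x s)) (Ici 0)) :
    ContinuousOn (fun p : X × ℝ => μ.real (ball p.1 p.2)) (univ ×ˢ Ici 0) := by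
  rw [Metric.continuousOn_iff]
  rintro ⟨x, r⟩ ⟨-, hr⟩ ε hε
  obtain ⟨δ, hδ, hball⟩ := exists_forall_measureReal_symmDiff_ball_lt hr hε (hfin x) (hcont x)
  refine ⟨δ, hδ, fun ⟨x', r'⟩ _ hd => ?_⟩
  rw [Prod.dist_eq, max_lt_iff, dist_comm, Real.dist_eq, abs_sub_comm] at hd
  rw [Real.dist_eq, abs_sub_comm]
  calc |μ.real (ball x r) - μ.real (ball x' r')|
      ≤ μ.real (ball x r ∆ ball x' r') :=
        abs_measureReal_sub_le_measureReal_symmDiff' measurableSet_ball.nullMeasurableSet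
          measurableSet_ball.nullMeasurableSet (hfin _ _) (hfin _ _)
    _ < ε := hball x' r' hd.1 hd.2

end Balls

/-- **Continuity of the ball map into the measure algebra.**
If `μ` is a Borel measure on a metric space in which every open ball has finite measure,
and for every `x` the map `r ↦ μ(B(x,r))` is continuous on `[0,∞)`, then the map
`(x,r) ↦ [B(x,r)]` is continuous into the measure algebra; in particular
`(x,r) ↦ μ(B(x,r))` is continuous on `X × [0,∞)`. -/
theorem stmt_3 {X : Type*} [MetricSpace X] [MeasurableSpace X] [BorelSpace X]
    (μ : Measure X)
    (hfin : ∀ (x : X) (r : ℝ), μ (ball x r) < ⊤)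
    (hcont : ∀ x : X, ContinuousOn (fun r : ℝ => (μ (ball x r)).toReal) (Ici 0)) :
    (∀ (x : X) (r : ℝ), 0 ≤ r → ∀ ε > (0 : ℝ), ∃ δ > (0 : ℝ),
      ∀ (x' : X) (r' : ℝ), 0 ≤ r' → dist x x' < δ → |r - r'| < δ →
        (μ (symmDiff (ball x r) (ball x' r'))).toReal < ε) ∧
    ContinuousOn (fun p : X × ℝ => (μ (ball p.1 p.2)).toReal) (univ ×ˢ Ici 0) := by
  have hfin' : ∀ x r, μ (ball x r) ≠ ⊤ := fun x r => (hfin x r).ne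
  refine ⟨fun x r hr ε hε => ?_, continuousOn_measureReal_ball hfin' hcont⟩
  obtain ⟨δ, hδ, hball⟩ := exists_forall_measureReal_symmDiff_ball_lt hr hε (hfin' x) (hcont x)
  exact ⟨δ, hδ, fun x' r' _ => hball x' r'⟩
end

section
/- Let (X,d) be a metric space with a fully supported, locally finite Borel measure μ, let x ∈ X, and let (εₙ) be a strictly decreasing sequence of positive reals converging to 0 such that 0 < μ(B(x,εₙ)) < ∞ for all n. If lim_{n→∞} μ(B(x,ε_{n+1}))/μ(B(x,εₙ)) = 1, then (εₙ) is a strong basis for density at x: for every measurable set A ⊆ X, limsup_{n→∞} μ(A ∩ B(x,εₙ))/μ(B(x,εₙ)) = limsup_{ε→0⁺} μ(A ∩ B(x,ε))/μ(B(x,ε)). -/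
open MeasureTheory Metric Set Filter Topology

/-! If `ε (n + 1) < e ≤ ε n`, then `μ(A ∩ B(x,e)) / μ(B(x,e))` is at most the density ratio at
radius `ε n` times `μ(B(x,ε n)) / μ(B(x,ε (n+1)))`, and the latter factor tends to `1`. So every
value of the ratio near `0` is, up to a factor close to `1`, bounded by a value along the sequence,
which bounds the continuous upper density by the sequential one; the reverse inequality holds
because `ε n → 0⁺`. -/

theorem Antitone.exists_succ_lt_le {α : Type*} [LinearOrder α] {ε : ℕ → α} (hε : Antitone ε)
    {e : α} (hlt : ∃ m, ε m < e) {N : ℕ} (heN : e ≤ ε N) :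
    ∃ n ≥ N, ε (n + 1) < e ∧ e ≤ ε n := by
  classical
  have hN : N < Nat.find hlt := by
    by_contra! h
    exact (heN.trans (hε h)).not_gt (Nat.find_spec hlt)
  refine ⟨Nat.find hlt - 1, by omega, ?_, not_lt.1 (Nat.find_min hlt (by omega))⟩
  rw [Nat.sub_add_cancel (by omega)]
  exact Nat.find_spec hlt

theorem limsup_comp_le_limsup_of_tendsto {α β : Type*} {l : Filter α} [l.NeBot] {l' : Filter β}
    {g : β → ℝ} {C : ℝ} (hg0 : 0 ≤ g) (hgC : ∀ e, g e ≤ C) {v : α → β} (hv : Tendsto v l l') :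
    limsup (g ∘ v) l ≤ limsup g l' := by
  rw [limsup_comp]
  exact limsup_le_limsup_of_le hv (isCoboundedUnder_le_of_le l fun a => hg0 (v a))
    (isBoundedUnder_of ⟨C, hgC⟩)

theorem limsup_nhdsGT_le_limsup_comp {g : ℝ → ℝ} {C : ℝ} (hg0 : 0 ≤ g) (hgC : ∀ e, g e ≤ C)
    {ε r : ℕ → ℝ} (hε : Antitone ε) (hεpos : ∀ n, 0 < ε n) (hεlim : Tendsto ε atTop (𝓝 0))
    (hr : Tendsto r atTop (𝓝 1))
    (hsandwich : ∀ n e, ε (n + 1) < e → e ≤ ε n → g e ≤ g (ε n) * r n) :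
    limsup g (𝓝[>] 0) ≤ limsup (g ∘ ε) atTop := by
  have hbdd : IsBoundedUnder (· ≤ ·) atTop (g ∘ ε) := isBoundedUnder_of ⟨C, fun n => hgC (ε n)⟩
  refine le_of_forall_gt_imp_ge_of_dense fun c hc => ?_
  obtain ⟨c', hc'lim, hc'c⟩ := exists_between hc
  have hc'pos : 0 < c' :=
    (le_limsup_of_frequently_le (.of_forall fun n => hg0 (ε n)) hbdd).trans_lt hc'lim
  obtain ⟨N, hN⟩ := eventually_atTop.1 <| (eventually_lt_of_limsup_lt hc'lim hbdd).and
    (hr.eventually (eventually_le_nhds ((one_lt_div hc'pos).2 hc'c)))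
  refine limsup_le_of_le (isCoboundedUnder_le_of_le _ hg0) ?_
  filter_upwards [Ioo_mem_nhdsGT (hεpos N)] with e ⟨he0, heN⟩
  obtain ⟨n, hn, hlt, hle⟩ :=
    hε.exists_succ_lt_le (hεlim.eventually (eventually_lt_nhds he0)).exists heN.le
  calc g e ≤ g (ε n) * r n := hsandwich n e hlt hle
    _ ≤ g (ε n) * (c / c') := mul_le_mul_of_nonneg_left (hN n hn).2 (hg0 _)
    _ ≤ c' * (c / c') :=
      mul_le_mul_of_nonneg_right (hN n hn).1.le (div_pos (hc'pos.trans hc'c) hc'pos).le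
    _ = c := by field_simp

section BallDensity

variable {X : Type*} [PseudoMetricSpace X] [MeasurableSpace X]

/-- Takes the junk value `0` when `μ (ball x e)` is `0` or `∞`. -/
noncomputable def ballDensity (μ : Measure X) (A : Set X) (x : X) (e : ℝ) : ℝ :=
  (μ (A ∩ ball x e)).toReal / (μ (ball x e)).toReal

theorem ballDensity_nonneg (μ : Measure X) (A : Set X) (x : X) : 0 ≤ ballDensity μ A x :=
  fun _ => div_nonneg ENNReal.toReal_nonneg ENNReal.toReal_nonneg

theorem ballDensity_le_one (μ : Measure X) (A : Set X) (x : X) (e : ℝ) :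
    ballDensity μ A x e ≤ 1 := by
  by_cases hfin : μ (ball x e) = ⊤
  · simp [ballDensity, hfin]
  · exact div_le_one_of_le₀ (ENNReal.toReal_mono hfin (measure_mono inter_subset_right))
      ENNReal.toReal_nonneg

theorem ballDensity_le_mul_div {μ : Measure X} (A : Set X) (x : X) {s e r : ℝ} (hse : s < e)
    (her : e ≤ r) (hs : 0 < μ (ball x s)) (hr : μ (ball x r) < ⊤) :
    ballDensity μ A x e ≤
      ballDensity μ A x r * ((μ (ball x r)).toReal / (μ (ball x s)).toReal) := by
  have hsr : μ (ball x s) ≤ μ (ball x r) := measure_mono (ball_subset_ball (hse.le.trans her))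
  have hs_pos : 0 < (μ (ball x s)).toReal := ENNReal.toReal_pos hs.ne' (hsr.trans_lt hr).ne
  have hr_ne : (μ (ball x r)).toReal ≠ 0 := (ENNReal.toReal_pos (hs.trans_le hsr).ne' hr.ne).ne'
  have hnum : (μ (A ∩ ball x e)).toReal ≤ (μ (A ∩ ball x r)).toReal :=
    ENNReal.toReal_mono ((measure_mono inter_subset_right).trans_lt hr).ne
      (measure_mono (inter_subset_inter_right A (ball_subset_ball her)))
  have hden : (μ (ball x s)).toReal ≤ (μ (ball x e)).toReal :=
    ENNReal.toReal_mono ((measure_mono (ball_subset_ball her)).trans_lt hr).ne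
      (measure_mono (ball_subset_ball hse.le))
  rw [ballDensity, ballDensity, div_mul_div_cancel₀ hr_ne]
  exact div_le_div₀ ENNReal.toReal_nonneg hnum hs_pos hden

end BallDensity

theorem stmt_5_general {X : Type*} [MetricSpace X] [MeasurableSpace X]
    (μ : Measure X)
    (x : X) (ε : ℕ → ℝ) (hεpos : ∀ n, 0 < ε n) (hεanti : StrictAnti ε)
    (hεlim : Tendsto ε atTop (𝓝 0))
    (hballpos : ∀ n, 0 < μ (ball x (ε n))) (hballfin : ∀ n, μ (ball x (ε n)) < ⊤)
    (hratio : Tendsto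
      (fun n => (μ (ball x (ε (n + 1)))).toReal / (μ (ball x (ε n))).toReal)
      atTop (𝓝 1)) :
    ∀ A : Set X, MeasurableSet A →
      limsup (fun n => (μ (A ∩ ball x (ε n))).toReal / (μ (ball x (ε n))).toReal) atTop =
      limsup (fun e : ℝ => (μ (A ∩ ball x e)).toReal / (μ (ball x e)).toReal)
        (𝓝[>] (0 : ℝ)) := by
  intro A _
  have hratio_inv : Tendsto
      (fun n => (μ (ball x (ε n))).toReal / (μ (ball x (ε (n + 1)))).toReal) atTop (𝓝 1) := by
    simpa only [inv_div, inv_one] using hratio.inv₀ one_ne_zero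
  have hεGT : Tendsto ε atTop (𝓝[>] 0) :=
    tendsto_nhdsWithin_of_tendsto_nhds_of_eventually_within _ hεlim (.of_forall hεpos)
  change limsup (ballDensity μ A x ∘ ε) atTop = limsup (ballDensity μ A x) (𝓝[>] 0)
  refine le_antisymm
    (limsup_comp_le_limsup_of_tendsto (ballDensity_nonneg μ A x) (ballDensity_le_one μ A x) hεGT)
    (limsup_nhdsGT_le_limsup_comp (ballDensity_nonneg μ A x) (ballDensity_le_one μ A x)
      hεanti.antitone hεpos hεlim hratio_inv fun n e hlt hle => ?_)
  exact ballDensity_le_mul_div A x hlt hle (hballpos (n + 1)) (hballfin n)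

/-- **A sequence of radii with consecutive measure-ratios tending to 1 is a strong basis for
density.** Let `μ` be a fully supported, locally finite Borel measure on a metric space `X`,
`x ∈ X`, and `(εₙ)` a strictly decreasing sequence of positive reals tending to `0` with
`0 < μ(B(x,εₙ)) < ∞`. If `μ(B(x,ε_{n+1}))/μ(B(x,εₙ)) → 1`, then for every measurable `A`,
`limsup_n μ(A ∩ B(x,εₙ))/μ(B(x,εₙ))` equals the upper density
`limsup_{ε→0⁺} μ(A ∩ B(x,ε))/μ(B(x,ε))`. -/
theorem stmt_5 {X : Type*} [MetricSpace X] [MeasurableSpace X] [BorelSpace X]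
    (μ : Measure X) [IsLocallyFiniteMeasure μ]
    (hfs : ∀ U : Set X, IsOpen U → U.Nonempty → 0 < μ U)
    (x : X) (ε : ℕ → ℝ) (hεpos : ∀ n, 0 < ε n) (hεanti : StrictAnti ε)
    (hεlim : Tendsto ε atTop (𝓝 0))
    (hballpos : ∀ n, 0 < μ (ball x (ε n))) (hballfin : ∀ n, μ (ball x (ε n)) < ⊤)
    (hratio : Tendsto
      (fun n => (μ (ball x (ε (n + 1)))).toReal / (μ (ball x (ε n))).toReal)
      atTop (𝓝 1)) :
    ∀ A : Set X, MeasurableSet A →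
      limsup (fun n => (μ (A ∩ ball x (ε n))).toReal / (μ (ball x (ε n))).toReal) atTop =
      limsup (fun e : ℝ => (μ (A ∩ ball x e)).toReal / (μ (ball x e)).toReal)
        (𝓝[>] (0 : ℝ)) :=
  stmt_5_general μ x ε hεpos hεanti hεlim hballpos hballfin hratio
end

section
/- Let (X,d) be a metric space with a fully supported, locally finite Borel measure μ, let x ∈ X, and let (εₙ) be a strictly decreasing sequence of positive reals converging to 0 with 0 < μ(B(x,εₙ)) < ∞ for all n. Suppose (εₙ) is a basis for density at x, i.e. for every measurable A ⊆ X and every r ∈ [0,1], if lim_{n→∞} μ(A ∩ B(x,εₙ))/μ(B(x,εₙ)) = r then the full limit lim_{ε→0⁺} μ(A ∩ B(x,ε))/μ(B(x,ε)) exists and equals r. If moreover the map r ↦ μ(B(x,r)) is continuous on [0,∞), then lim_{n→∞} μ(B(x,ε_{n+1}))/μ(B(x,εₙ)) = 1. -/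
/-!
Choose radii `tₙ ∈ [εₙ₊₁, εₙ]` with `μ(B(x,tₙ))` the average of `μ(B(x,εₙ₊₁))` and `μ(B(x,εₙ))`
(possible by continuity of the radius function), and let `A` be the union of the annuli
`B(x,tₙ) \ B(x,εₙ₊₁)`. Since the annuli fill half of each shell `B(x,εₙ) \ B(x,εₙ₊₁)`,
`μ(A ∩ B(x,r)) = μ(B(x,εₙ))/2` for every `r ∈ [tₙ, εₙ]`. So `A` has density `1/2` along `(εₙ)`,
hence along `(tₙ)`, which says `2 μ(B(x,εₙ)) / (μ(B(x,εₙ₊₁)) + μ(B(x,εₙ))) → 1`.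
-/

open MeasureTheory Metric Set Filter Topology

theorem eq_of_sub_succ_eq_sub_succ {G : Type*} [AddCommGroup G] [TopologicalSpace G]
    [IsTopologicalAddGroup G] [T2Space G] {u v : ℕ → G} {L : G}
    (hu : Tendsto u atTop (𝓝 L)) (hv : Tendsto v atTop (𝓝 L))
    (h : ∀ n, u n - u (n + 1) = v n - v (n + 1)) : u = v := by
  have hconst : ∀ n, u n - v n = u 0 - v 0 := by
    intro n
    induction n with
    | zero => rfl
    | succ k ih => rw [← ih, eq_comm, sub_eq_sub_iff_sub_eq_sub, h k]
  have hlim : Tendsto (fun n => u n - v n) atTop (𝓝 (u 0 - v 0)) := by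
    simp only [hconst, tendsto_const_nhds]
  have hzero : u 0 - v 0 = 0 := tendsto_nhds_unique hlim (by simpa using hu.sub hv)
  funext n
  rw [← sub_eq_zero, hconst n, hzero]

theorem tendsto_div_of_tendsto_div_add_self {α : Type*} {l : Filter α} {a b : α → ℝ}
    (ha : ∀ i, a i ≠ 0) (h : Tendsto (fun i => a i / (b i + a i)) l (𝓝 (1 / 2))) :
    Tendsto (fun i => b i / a i) l (𝓝 1) := by
  have hinv : Tendsto (fun i => b i / a i + 1) l (𝓝 2) := by
    convert h.inv₀ (by norm_num) using 1
    · funext i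
      rw [inv_div, add_div, div_self (ha i)]
    · norm_num
  convert hinv.sub_const 1 using 2 <;> norm_num

theorem exists_mem_Icc_toReal_measure_ball_eq_midpoint {X : Type*} [PseudoMetricSpace X]
    [MeasurableSpace X] (μ : Measure X) (x : X) {a b : ℝ} (hab : a ≤ b)
    (hcont : ContinuousOn (fun r => μ (ball x r)) (Icc a b)) (hfin : μ (ball x b) ≠ ⊤) :
    ∃ t ∈ Icc a b,
      (μ (ball x t)).toReal = ((μ (ball x a)).toReal + (μ (ball x b)).toReal) / 2 := by
  have hfin' : ∀ r ∈ Icc a b, μ (ball x r) ≠ ⊤ := fun r hr =>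
    ne_top_of_le_ne_top hfin (measure_mono (ball_subset_ball hr.2))
  have hmono : (μ (ball x a)).toReal ≤ (μ (ball x b)).toReal :=
    ENNReal.toReal_mono hfin (measure_mono (ball_subset_ball hab))
  exact intermediate_value_Icc hab (ENNReal.continuousOn_toReal.comp hcont hfin')
    (show _ ∈ Icc (μ (ball x a)).toReal (μ (ball x b)).toReal from ⟨by linarith, by linarith⟩)

section Annuli

variable {X : Type*} [PseudoMetricSpace X] (x : X)

def annuliUnion (ε t : ℕ → ℝ) : Set X :=
  ⋃ n, ball x (t n) \ ball x (ε (n + 1))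

theorem measurableSet_annuliUnion [MeasurableSpace X] [OpensMeasurableSpace X]
    (ε t : ℕ → ℝ) : MeasurableSet (annuliUnion x ε t) :=
  .iUnion fun _ => measurableSet_ball.diff measurableSet_ball

variable {x} {ε t : ℕ → ℝ} (hε : Antitone ε) (ht : ∀ n, t n ∈ Icc (ε (n + 1)) (ε n))
include hε ht

theorem annuliUnion_inter_ball {n : ℕ} {r : ℝ} (hr : r ∈ Icc (t n) (ε n)) :
    annuliUnion x ε t ∩ ball x r =
      (annuliUnion x ε t ∩ ball x (ε (n + 1))) ∪ (ball x (t n) \ ball x (ε (n + 1))) := by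
  ext y
  constructor
  · rintro ⟨hyA, hyr⟩
    by_cases hy : y ∈ ball x (ε (n + 1))
    · exact .inl ⟨hyA, hy⟩
    · right
      obtain ⟨k, hyt, hyε⟩ := mem_iUnion.1 hyA
      rcases lt_trichotomy k n with hkn | rfl | hnk
      · exact absurd (ball_subset_ball (hr.2.trans (hε hkn))) (fun h => hyε (h hyr))
      · exact ⟨hyt, hyε⟩
      · exact absurd (ball_subset_ball ((ht k).2.trans (hε hnk)) hyt) hy
  · rintro (⟨hyA, hy⟩ | hy)
    · exact ⟨hyA, ball_subset_ball ((ht n).1.trans hr.1) hy⟩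
    · exact ⟨mem_iUnion.2 ⟨n, hy⟩, ball_subset_ball hr.1 hy.1⟩

variable [MeasurableSpace X] [OpensMeasurableSpace X] (μ : Measure X)
  (hfin : ∀ n, μ (ball x (ε n)) ≠ ⊤)
include hfin

theorem toReal_measure_annuliUnion_inter_ball_eq_add {n : ℕ} {r : ℝ}
    (hr : r ∈ Icc (t n) (ε n)) :
    (μ (annuliUnion x ε t ∩ ball x r)).toReal =
      (μ (annuliUnion x ε t ∩ ball x (ε (n + 1)))).toReal +
        ((μ (ball x (t n))).toReal - (μ (ball x (ε (n + 1)))).toReal) := by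
  have hball_t : μ (ball x (t n)) ≠ ⊤ :=
    ne_top_of_le_ne_top (hfin n) (measure_mono (ball_subset_ball (ht n).2))
  have hdisj : Disjoint (annuliUnion x ε t ∩ ball x (ε (n + 1)))
      (ball x (t n) \ ball x (ε (n + 1))) :=
    disjoint_left.2 fun _ hy hy' => hy'.2 hy.2
  rw [annuliUnion_inter_ball hε ht hr,
    measure_union hdisj (measurableSet_ball.diff measurableSet_ball),
    ENNReal.toReal_add (ne_top_of_le_ne_top (hfin (n + 1)) (measure_mono inter_subset_right))
      (ne_top_of_le_ne_top hball_t (measure_mono sdiff_subset)),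
    measure_sdiff (ball_subset_ball (ht n).1) measurableSet_ball.nullMeasurableSet (hfin (n + 1)),
    ENNReal.toReal_sub_of_le (measure_mono (ball_subset_ball (ht n).1)) hball_t]

theorem toReal_measure_annuliUnion_inter_ball
    (hmid : ∀ n, (μ (ball x (t n))).toReal =
      ((μ (ball x (ε (n + 1)))).toReal + (μ (ball x (ε n))).toReal) / 2)
    (hlim : Tendsto (fun n => μ (ball x (ε n))) atTop (𝓝 0))
    {n : ℕ} {r : ℝ} (hr : r ∈ Icc (t n) (ε n)) :
    (μ (annuliUnion x ε t ∩ ball x r)).toReal = (μ (ball x (ε n))).toReal / 2 := by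
  have hlim_real : Tendsto (fun n => (μ (ball x (ε n))).toReal) atTop (𝓝 0) := by
    simpa [Function.comp_def] using (ENNReal.tendsto_toReal ENNReal.zero_ne_top).comp hlim
  have hlim_A : Tendsto (fun n => (μ (annuliUnion x ε t ∩ ball x (ε n))).toReal)
      atTop (𝓝 0) :=
    squeeze_zero (fun _ => ENNReal.toReal_nonneg)
      (fun n => ENNReal.toReal_mono (hfin n) (measure_mono inter_subset_right)) hlim_real
  have hshell : ∀ n, (μ (annuliUnion x ε t ∩ ball x (ε n))).toReal =
      (μ (ball x (ε n))).toReal / 2 := by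
    refine congrFun (eq_of_sub_succ_eq_sub_succ hlim_A (by simpa using hlim_real.div_const 2)
      fun n => ?_)
    rw [toReal_measure_annuliUnion_inter_ball_eq_add hε ht μ hfin ⟨(ht n).2, le_rfl⟩, hmid n]
    ring
  rw [toReal_measure_annuliUnion_inter_ball_eq_add hε ht μ hfin hr, hshell, hmid n]
  ring

end Annuli

theorem stmt_6_general {X : Type*} [MetricSpace X] [MeasurableSpace X] [BorelSpace X]
    (μ : Measure X)
    (x : X) (ε : ℕ → ℝ) (hεpos : ∀ n, 0 < ε n) (hεanti : StrictAnti ε)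
    (hεlim : Tendsto ε atTop (𝓝 0))
    (hballpos : ∀ n, 0 < μ (ball x (ε n))) (hballfin : ∀ n, μ (ball x (ε n)) < ⊤)
    (hbasis : ∀ A : Set X, MeasurableSet A → ∀ r ∈ Icc (0 : ℝ) 1,
      Tendsto (fun n => (μ (A ∩ ball x (ε n))).toReal / (μ (ball x (ε n))).toReal)
        atTop (𝓝 r) →
      Tendsto (fun e : ℝ => (μ (A ∩ ball x e)).toReal / (μ (ball x e)).toReal)
        (𝓝[>] (0 : ℝ)) (𝓝 r))
    (hcont : ContinuousOn (fun r : ℝ => μ (ball x r)) (Ici 0)) :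
    Tendsto (fun n => (μ (ball x (ε (n + 1)))).toReal / (μ (ball x (ε n))).toReal)
      atTop (𝓝 1) := by
  have hfin : ∀ n, μ (ball x (ε n)) ≠ ⊤ := fun n => (hballfin n).ne
  have hm_ne : ∀ n, (μ (ball x (ε n))).toReal ≠ 0 := fun n =>
    (ENNReal.toReal_pos (hballpos n).ne' (hfin n)).ne'
  choose t ht hmid using fun n => exists_mem_Icc_toReal_measure_ball_eq_midpoint μ x
    (hεanti.antitone n.le_succ) (hcont.mono (Icc_subset_Ici_iff (hεanti.antitone n.le_succ)
      |>.2 (hεpos (n + 1)).le)) (hfin n)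
  have hlim : Tendsto (fun n => μ (ball x (ε n))) atTop (𝓝 0) := by
    simpa [Function.comp_def] using (hcont 0 self_mem_Ici).tendsto.comp
      (tendsto_nhdsWithin_iff.2 ⟨hεlim, .of_forall fun n => (hεpos n).le⟩)
  have hA : ∀ n, ∀ r ∈ Icc (t n) (ε n),
      (μ (annuliUnion x ε t ∩ ball x r)).toReal = (μ (ball x (ε n))).toReal / 2 := fun _ _ =>
    toReal_measure_annuliUnion_inter_ball hεanti.antitone ht μ hfin hmid hlim
  have ht0 : Tendsto t atTop (𝓝[>] 0) :=
    tendsto_nhdsWithin_iff.2 ⟨tendsto_of_tendsto_of_tendsto_of_le_of_le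
      (hεlim.comp (tendsto_add_atTop_nat 1)) hεlim (fun n => (ht n).1) (fun n => (ht n).2),
      .of_forall fun n => (hεpos (n + 1)).trans_le (ht n).1⟩
  have hhalf : Tendsto (fun n => (μ (annuliUnion x ε t ∩ ball x (ε n))).toReal /
      (μ (ball x (ε n))).toReal) atTop (𝓝 (1 / 2)) :=
    tendsto_const_nhds.congr fun n => by
      rw [hA n _ ⟨(ht n).2, le_rfl⟩, div_right_comm, div_self (hm_ne n)]
  refine tendsto_div_of_tendsto_div_add_self hm_ne
    (((hbasis _ (measurableSet_annuliUnion x ε t) (1 / 2) ⟨by norm_num, by norm_num⟩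
      hhalf).comp ht0).congr fun n => ?_)
  rw [Function.comp_apply, hA n _ ⟨le_rfl, (ht n).2⟩, hmid n,
    div_div_div_cancel_right₀ two_ne_zero]

/-- **For a continuous measure, a basis for density must have consecutive measure-ratios
tending to 1.** Let `μ` be a fully supported, locally finite Borel measure on a metric
space `X`, `x ∈ X`, and `(εₙ)` a strictly decreasing sequence of positive reals tending
to `0` with `0 < μ(B(x,εₙ)) < ∞`. Assume `(εₙ)` is a basis for density at `x`: for every
measurable `A` and every `r ∈ [0,1]`, if `μ(A ∩ B(x,εₙ))/μ(B(x,εₙ)) → r` then the full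
limit `lim_{ε→0⁺} μ(A ∩ B(x,ε))/μ(B(x,ε))` exists and equals `r`. If moreover
`r ↦ μ(B(x,r))` is continuous on `[0,∞)`, then `μ(B(x,ε_{n+1}))/μ(B(x,εₙ)) → 1`. -/
theorem stmt_6 {X : Type*} [MetricSpace X] [MeasurableSpace X] [BorelSpace X]
    (μ : Measure X) [IsLocallyFiniteMeasure μ]
    (hfs : ∀ U : Set X, IsOpen U → U.Nonempty → 0 < μ U)
    (x : X) (ε : ℕ → ℝ) (hεpos : ∀ n, 0 < ε n) (hεanti : StrictAnti ε)
    (hεlim : Tendsto ε atTop (𝓝 0))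
    (hballpos : ∀ n, 0 < μ (ball x (ε n))) (hballfin : ∀ n, μ (ball x (ε n)) < ⊤)
    (hbasis : ∀ A : Set X, MeasurableSet A → ∀ r ∈ Icc (0 : ℝ) 1,
      Tendsto (fun n => (μ (A ∩ ball x (ε n))).toReal / (μ (ball x (ε n))).toReal)
        atTop (𝓝 r) →
      Tendsto (fun e : ℝ => (μ (A ∩ ball x e)).toReal / (μ (ball x e)).toReal)
        (𝓝[>] (0 : ℝ)) (𝓝 r))
    (hcont : ContinuousOn (fun r : ℝ => μ (ball x r)) (Ici 0)) :
    Tendsto (fun n => (μ (ball x (ε (n + 1)))).toReal / (μ (ball x (ε n))).toReal)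
      atTop (𝓝 1) :=
  stmt_6_general μ x ε hεpos hεanti hεlim hballpos hballfin hbasis hcont
end

section
/- Let (X,d) be a separable metric space and let μ be a locally finite, tight Borel measure on X. Let A ⊆ X be measurable with μ(A ∖ Φ(A)) = 0. Then the topological closure of Φ(A) equals Cl_μ(A), the μ-closure of A. -/
open MeasureTheory Metric Set Filter Topology
open scoped ENNReal

/-- The density of a set `A` at a point `x`: the limit, as `ε → 0⁺`, of
`μ(A ∩ B(x,ε))/μ(B(x,ε))`. -/
def HasDensity {X : Type*} [MetricSpace X] [MeasurableSpace X]
    (μ : Measure X) (A : Set X) (x : X) (v : ℝ) : Prop :=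
  Tendsto (fun e : ℝ => (μ (A ∩ ball x e)).toReal / (μ (ball x e)).toReal)
    (𝓝[>] (0 : ℝ)) (𝓝 v)

/-- `Φ(A)` is the set of points where `A` has density `1`. -/
def PhiSet {X : Type*} [MetricSpace X] [MeasurableSpace X]
    (μ : Measure X) (A : Set X) : Set X :=
  {x | HasDensity μ A x 1}

/-- The `μ`-closure of `A`: the complement of the union of all open sets meeting `A` in a
null set. -/
def muClosure {X : Type*} [MetricSpace X] [MeasurableSpace X]
    (μ : Measure X) (A : Set X) : Set X :=
  (⋃₀ {U : Set X | IsOpen U ∧ μ (A ∩ U) = 0})ᶜ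

/-! A point of density one cannot lie in an open set meeting `A` in a null set, so `Φ(A)` lies in
the closed set `Cl_μ(A)`. Conversely, the complement of the closure of `Φ(A)` is open and meets `A`
only inside the null set `A ∖ Φ(A)`. -/

section

variable {X : Type*} [MetricSpace X] [MeasurableSpace X] {μ : Measure X} {A : Set X} {x : X}

theorem HasDensity.unique {v w : ℝ} (hv : HasDensity μ A x v) (hw : HasDensity μ A x w) :
    v = w :=
  tendsto_nhds_unique hv hw

theorem hasDensity_zero_of_measure_inter_eq_zero {U : Set X} (hU : U ∈ 𝓝 x)
    (hAU : μ (A ∩ U) = 0) : HasDensity μ A x 0 := by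
  obtain ⟨δ, hδ, hball⟩ := Metric.mem_nhds_iff.1 hU
  refine tendsto_const_nhds.congr' ?_
  filter_upwards [Ioo_mem_nhdsGT hδ] with e he
  have hnull : μ (A ∩ ball x e) = 0 :=
    measure_mono_null (inter_subset_inter_right _ ((ball_subset_ball he.2.le).trans hball)) hAU
  simp [hnull]

theorem isClosed_muClosure : IsClosed (muClosure μ A) :=
  (isOpen_sUnion fun _ hU => hU.1).isClosed_compl

theorem phiSet_subset_muClosure : PhiSet μ A ⊆ muClosure μ A := by
  rintro x hx ⟨U, ⟨hUo, hAU⟩, hxU⟩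
  exact one_ne_zero (hx.unique (hasDensity_zero_of_measure_inter_eq_zero (hUo.mem_nhds hxU) hAU))

theorem muClosure_subset_closure_of_measure_diff_eq_zero {S : Set X} (hS : μ (A \ S) = 0) :
    muClosure μ A ⊆ closure S := by
  intro x hx
  by_contra hxS
  refine hx ⟨(closure S)ᶜ, ⟨isClosed_closure.isOpen_compl, ?_⟩, hxS⟩
  exact measure_mono_null (sdiff_subset_sdiff_right subset_closure) hS

end

theorem stmt_8_general {X : Type*} [MetricSpace X]
    [MeasurableSpace X]
    (μ : Measure X)
    (A : Set X)
    (hAPhi : μ (A \ PhiSet μ A) = 0) :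
    closure (PhiSet μ A) = muClosure μ A :=
  (closure_minimal phiSet_subset_muClosure isClosed_muClosure).antisymm
    (muClosure_subset_closure_of_measure_diff_eq_zero hAPhi)

/-- **`Cl Φ(A) = Cl_μ(A)`.** Let `μ` be a locally finite, tight Borel measure on a separable
metric space and let `A` be measurable with `μ(A ∖ Φ(A)) = 0`. Then the topological closure
of `Φ(A)` equals the `μ`-closure of `A`. -/
theorem stmt_8 {X : Type*} [MetricSpace X] [TopologicalSpace.SeparableSpace X]
    [MeasurableSpace X] [BorelSpace X]
    (μ : Measure X) [IsLocallyFiniteMeasure μ]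
    (htight : ∀ E : Set X, MeasurableSet E → ∀ r : ℝ≥0∞, r < μ E →
      ∃ K : Set X, IsCompact K ∧ K ⊆ E ∧ r < μ K)
    (A : Set X) (hA : MeasurableSet A)
    (hAPhi : μ (A \ PhiSet μ A) = 0) :
    closure (PhiSet μ A) = muClosure μ A :=
  stmt_8_general μ A hAPhi
end

section
/- Let (X,d) be a separable metric space and let μ be a locally finite, tight Borel measure on X with μ({x}) = 0 for every x ∈ X. If A ⊆ X is measurable with 0 < μ(A) < ∞, then for every ε > 0 there is a compact set K ⊆ A with empty interior such that μ(A) − ε < μ(K). -/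
/-!
A countable dense set `D` is `μ`-null because `μ` has no atoms, so by outer regularity it lies in
an open set `U` of measure less than `min ε (μ A)`. Since `U` is dense, every subset of its
complement has empty interior, and `μ (A \ U) > μ A - ε`; a compact `K ⊆ A \ U` given by tightness
does the job.
-/

open MeasureTheory Set
open scoped ENNReal

theorem ENNReal.sub_lt_sub_left_of_lt {a b c : ℝ≥0∞} (ha : a ≠ ∞) (hbc : b < c) (hba : b < a) :
    a - c < a - b := by
  rcases le_or_gt c a with hca | hac
  · exact (ENNReal.cancel_of_ne (ne_top_of_le_ne_top ha tsub_le_self)).tsub_lt_tsub_left_of_le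
      hca hbc
  · rw [tsub_eq_zero_of_le hac.le]
    exact tsub_pos_of_lt hba

theorem MeasureTheory.sub_lt_measure_sdiff {X : Type*} [MeasurableSpace X] {μ : Measure X}
    {A U : Set X} {ε : ℝ≥0∞} (hA : μ A ≠ ∞) (hUε : μ U < ε) (hUA : μ U < μ A) :
    μ A - ε < μ (A \ U) :=
  (ENNReal.sub_lt_sub_left_of_lt hA hUε hUA).trans_le le_measure_sdiff

theorem MeasureTheory.Measure.exists_isOpen_dense_measure_lt {X : Type*} [TopologicalSpace X]
    [TopologicalSpace.SeparableSpace X] [MeasurableSpace X] (μ : Measure X) [μ.OuterRegular]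
    [NullSingletonClass μ] {δ : ℝ≥0∞} (hδ : δ ≠ 0) :
    ∃ U : Set X, IsOpen U ∧ Dense U ∧ μ U < δ := by
  obtain ⟨D, hD_countable, hD_dense⟩ := TopologicalSpace.exists_countable_dense X
  have hD_null : μ D < δ := by
    rw [hD_countable.measure_zero μ]
    exact pos_iff_ne_zero.2 hδ
  obtain ⟨U, hDU, hU_open, hU⟩ := D.exists_isOpen_lt_of_lt δ hD_null
  exact ⟨U, hU_open, hD_dense.mono hDU, hU⟩

theorem interior_eq_empty_of_subset_compl_dense {X : Type*} [TopologicalSpace X] {K U : Set X}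
    (hU : Dense U) (hKU : K ⊆ Uᶜ) : interior K = ∅ :=
  interior_eq_empty_iff_dense_compl.2 (hU.mono (subset_compl_comm.1 hKU))

/-- **Large compact subsets with empty interior.** Let `μ` be a locally finite, tight,
nonsingular Borel measure on a separable metric space `X`. If `A` is measurable with
`0 < μ(A) < ∞`, then for every `ε > 0` there is a compact `K ⊆ A` with empty interior
such that `μ(A) − ε < μ(K)`. -/
theorem stmt_9 {X : Type*} [MetricSpace X] [TopologicalSpace.SeparableSpace X]
    [MeasurableSpace X] [BorelSpace X]
    (μ : Measure X) [IsLocallyFiniteMeasure μ]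
    (htight : ∀ E : Set X, MeasurableSet E → ∀ r : ℝ≥0∞, r < μ E →
      ∃ K : Set X, IsCompact K ∧ K ⊆ E ∧ r < μ K)
    (hns : ∀ x : X, μ {x} = 0)
    (A : Set X) (hA : MeasurableSet A) (hApos : 0 < μ A) (hAfin : μ A < ⊤) :
    ∀ ε : ℝ≥0∞, 0 < ε →
      ∃ K : Set X, IsCompact K ∧ K ⊆ A ∧ interior K = ∅ ∧ μ A - ε < μ K := by
  intro ε hε
  have : SecondCountableTopology X := UniformSpace.secondCountable_of_separable X
  have : NullSingletonClass μ := ⟨hns⟩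
  obtain ⟨U, hU_open, hU_dense, hU⟩ :=
    μ.exists_isOpen_dense_measure_lt (lt_min hε hApos).ne'
  have hAU : μ A - ε < μ (A \ U) :=
    sub_lt_measure_sdiff hAfin.ne (hU.trans_le (min_le_left _ _)) (hU.trans_le (min_le_right _ _))
  obtain ⟨K, hK_compact, hKAU, hK⟩ := htight (A \ U) (hA.diff hU_open.measurableSet) _ hAU
  exact ⟨K, hK_compact, hKAU.trans sdiff_subset,
    interior_eq_empty_of_subset_compl_dense hU_dense (hKAU.trans (sdiff_subset_compl _ _)), hK⟩
end

section
/- Let (X,d) be a separable metric space and let μ be a Borel measure on X that is locally finite, tight, fully supported (μ(U) > 0 for every nonempty open U), and satisfies μ({x}) = 0 for every x ∈ X. Then there exists a σ-compact set F ⊆ X (a countable union of compact sets) that is simultaneously thick and co-thick: for every nonempty open U ⊆ X one has μ(F ∩ U) > 0 and μ(U ∖ F) > 0. -/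
open MeasureTheory Set Function

/-! Fix a countable π-base `V₀, V₁, …` of nonempty open sets. Every nonempty open set contains
a compact nowhere dense set of positive measure: remove from a compact set of positive measure
an open dense set of smaller measure, which exists because points are null and `X` is
separable. A finite union of closed nowhere dense sets leaves a nonempty open part of every `Vₖ`,
so such sets `M₀, M₁, …` can be chosen greedily, pairwise disjoint, with `M (2k), M (2k+1) ⊆ Vₖ`.
Then `F = ⋃ₖ M (2k)` works: `M (2k) ⊆ F ∩ Vₖ` and `M (2k+1) ⊆ Vₖ \ F`. -/

theorem TopologicalSpace.exists_seq_isOpen_nonempty_subset_of_isOpen (X : Type*)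
    [TopologicalSpace X] [SecondCountableTopology X] [Nonempty X] :
    ∃ V : ℕ → Set X, (∀ n, IsOpen (V n)) ∧ (∀ n, (V n).Nonempty) ∧
      ∀ U, IsOpen U → U.Nonempty → ∃ n, V n ⊆ U := by
  obtain ⟨b, hbc, hbe, hb⟩ := exists_countable_basis X
  obtain ⟨x⟩ := ‹Nonempty X›
  obtain ⟨v, hv, -⟩ := hb.exists_subset_of_mem_open (mem_univ x) isOpen_univ
  obtain ⟨V, rfl⟩ := hbc.exists_eq_range ⟨v, hv⟩
  refine ⟨V, fun n => hb.isOpen (mem_range_self n),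
    fun n => nonempty_iff_ne_empty.2 fun h => hbe (h ▸ mem_range_self n), ?_⟩
  rintro U hU ⟨x, hx⟩
  obtain ⟨_, ⟨n, rfl⟩, -, hn⟩ := hb.exists_subset_of_mem_open hx hU
  exact ⟨n, hn⟩

theorem exists_pairwise_disjoint_of_forall_exists_disjoint {α : Type*} {P : Set α → Prop}
    {Q : ℕ → Set α → Prop} (h_empty : P ∅) (h_union : ∀ s t, P s → P t → P (s ∪ t))
    (h_step : ∀ n s, P s → ∃ t, P t ∧ Q n t ∧ Disjoint t s) :
    ∃ M : ℕ → Set α, Pairwise (Disjoint on M) ∧ ∀ n, Q n (M n) := by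
  choose next hnextP hnextQ hnextD using h_step
  let acc : ℕ → {s // P s} := fun n =>
    Nat.rec (motive := fun _ => {s // P s}) ⟨∅, h_empty⟩
      (fun n s => ⟨s ∪ next n s s.2, h_union _ _ s.2 (hnextP _ _ _)⟩) n
  have hacc_mono : Monotone fun n => (acc n : Set α) :=
    monotone_nat_of_le_succ fun _ => subset_union_left
  refine ⟨fun n => next n (acc n) (acc n).2, (pairwise_disjoint_on _).2 fun m n hmn => ?_,
    fun n => hnextQ _ _ _⟩
  exact (hnextD _ _ _).symm.mono_left (subset_union_right.trans (hacc_mono hmn))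

section Measure

variable {X : Type*} [MetricSpace X] [MeasurableSpace X] [BorelSpace X] {μ : Measure X}
  [IsLocallyFiniteMeasure μ]

theorem exists_isOpen_mem_measure_lt {x : X} (hx : μ {x} = 0) {ε : ENNReal} (hε : 0 < ε) :
    ∃ V, IsOpen V ∧ x ∈ V ∧ μ V < ε := by
  obtain ⟨R, hR, hRfin⟩ := (μ.finiteAt_nhds x).exists_mem_basis Metric.nhds_basis_ball
  have h := tendsto_measure_thickening_of_isClosed
    ⟨R, hR, by rw [Metric.thickening_singleton]; exact hRfin.ne⟩ (isClosed_singleton (x := x))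
  rw [hx] at h
  obtain ⟨r, hr, hrpos⟩ := ((h.eventually (gt_mem_nhds hε)).and self_mem_nhdsWithin).exists
  exact ⟨_, Metric.isOpen_thickening, Metric.self_subset_thickening hrpos {x} rfl, hr⟩

theorem exists_isOpen_dense_measure_lt [TopologicalSpace.SeparableSpace X]
    (hns : ∀ x : X, μ {x} = 0) {ε : ENNReal} (hε : 0 < ε) :
    ∃ U, IsOpen U ∧ Dense U ∧ μ U < ε := by
  obtain ⟨s, hsc, hsd⟩ := TopologicalSpace.exists_countable_dense X
  have := hsc.to_subtype
  obtain ⟨δ, hδpos, hδ⟩ := ENNReal.exists_pos_sum_of_countable' hε.ne' s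
  choose V hVo hxV hV using fun x : s => exists_isOpen_mem_measure_lt (hns x) (hδpos x)
  refine ⟨⋃ x, V x, isOpen_iUnion hVo, hsd.mono fun x hx => mem_iUnion.2 ⟨⟨x, hx⟩, hxV _⟩, ?_⟩
  calc μ (⋃ x, V x) ≤ ∑' x, μ (V x) := measure_iUnion_le _
    _ ≤ ∑' x, δ x := ENNReal.tsum_le_tsum fun x => (hV x).le
    _ < ε := hδ

theorem IsCompact.exists_subset_interior_eq_empty_measure_pos [TopologicalSpace.SeparableSpace X]
    (hns : ∀ x : X, μ {x} = 0) {K₀ : Set X} (hK₀ : IsCompact K₀) (hpos : 0 < μ K₀) :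
    ∃ K ⊆ K₀, IsCompact K ∧ interior K = ∅ ∧ 0 < μ K := by
  obtain ⟨U, hUo, hUd, hU⟩ := exists_isOpen_dense_measure_lt hns hpos
  refine ⟨K₀ \ U, sdiff_subset, hK₀.diff hUo, ?_, ?_⟩
  · exact eq_empty_of_subset_empty
      (hUd.interior_compl ▸ interior_mono (sdiff_subset_compl K₀ U))
  · exact (tsub_pos_of_lt hU).trans_le le_measure_sdiff

theorem exists_pairwise_disjoint_isCompact_subset_measure_pos
    [TopologicalSpace.SeparableSpace X]
    (htight : ∀ E : Set X, MeasurableSet E → ∀ r : ENNReal, r < μ E →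
      ∃ K : Set X, IsCompact K ∧ K ⊆ E ∧ r < μ K)
    (hfs : ∀ U : Set X, IsOpen U → U.Nonempty → 0 < μ U)
    (hns : ∀ x : X, μ {x} = 0) {W : ℕ → Set X} (hWo : ∀ n, IsOpen (W n))
    (hWne : ∀ n, (W n).Nonempty) :
    ∃ M : ℕ → Set X, Pairwise (Disjoint on M) ∧
      ∀ n, IsCompact (M n) ∧ M n ⊆ W n ∧ 0 < μ (M n) := by
  refine exists_pairwise_disjoint_of_forall_exists_disjoint
    (P := fun s => IsClosed s ∧ interior s = ∅) (Q := fun n t => IsCompact t ∧ t ⊆ W n ∧ 0 < μ t)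
    ⟨isClosed_empty, interior_empty⟩ (fun s t hs ht => ⟨hs.1.union ht.1,
      by rw [interior_union_isClosed_of_interior_empty hs.1 ht.2, hs.2]⟩) fun n C hC => ?_
  have hWC : IsOpen (W n \ C) := (hWo n).sdiff hC.1
  have hWCne : (W n \ C).Nonempty :=
    (interior_eq_empty_iff_dense_compl.1 hC.2).inter_open_nonempty _ (hWo n) (hWne n)
  obtain ⟨K₀, hK₀, hK₀W, hK₀pos⟩ := htight _ hWC.measurableSet 0 (hfs _ hWC hWCne)
  obtain ⟨K, hKK₀, hK, hKint, hKpos⟩ :=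
    hK₀.exists_subset_interior_eq_empty_measure_pos hns hK₀pos
  have hKWC : K ⊆ W n \ C := hKK₀.trans hK₀W
  exact ⟨K, ⟨hK.isClosed, hKint⟩, ⟨hK, hKWC.trans sdiff_subset, hKpos⟩,
    disjoint_sdiff_left.mono_left hKWC⟩

end Measure

/-- **Existence of a σ-compact set that is thick and co-thick.** Let `μ` be a locally
finite, tight, fully supported, nonsingular Borel measure on a separable metric space `X`.
Then there is a σ-compact `F ⊆ X` such that for every nonempty open `U` one has
`μ(F ∩ U) > 0` and `μ(U ∖ F) > 0`. -/
theorem stmt_10 {X : Type*} [MetricSpace X] [TopologicalSpace.SeparableSpace X]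
    [MeasurableSpace X] [BorelSpace X]
    (μ : Measure X) [IsLocallyFiniteMeasure μ]
    (htight : ∀ E : Set X, MeasurableSet E → ∀ r : ENNReal, r < μ E →
      ∃ K : Set X, IsCompact K ∧ K ⊆ E ∧ r < μ K)
    (hfs : ∀ U : Set X, IsOpen U → U.Nonempty → 0 < μ U)
    (hns : ∀ x : X, μ {x} = 0) :
    ∃ F : Set X, (∃ K : ℕ → Set X, (∀ n, IsCompact (K n)) ∧ F = ⋃ n, K n) ∧
      ∀ U : Set X, IsOpen U → U.Nonempty → 0 < μ (F ∩ U) ∧ 0 < μ (U \ F) := by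
  rcases isEmpty_or_nonempty X with hX | hX
  · exact ⟨∅, ⟨fun _ => ∅, fun _ => isCompact_empty, iUnion_empty.symm⟩,
      fun _ _ ⟨x, _⟩ => isEmptyElim x⟩
  obtain ⟨V, hVo, hVne, hV⟩ := TopologicalSpace.exists_seq_isOpen_nonempty_subset_of_isOpen X
  obtain ⟨M, hdisj, hM⟩ := exists_pairwise_disjoint_isCompact_subset_measure_pos htight hfs hns
    (W := fun n => V (n / 2)) (fun _ => hVo _) (fun _ => hVne _)
  refine ⟨⋃ k, M (2 * k), ⟨_, fun k => (hM _).1, rfl⟩, fun U hU hUne => ?_⟩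
  obtain ⟨k, hk⟩ := hV U hU hUne
  have hMU : ∀ n, n / 2 = k → M n ⊆ U := fun n hn => (hM n).2.1.trans (hn ▸ hk)
  have hodd : Disjoint (M (2 * k + 1)) (⋃ j, M (2 * j)) :=
    disjoint_iUnion_right.2 fun j => hdisj (by omega)
  constructor
  · exact (hM _).2.2.trans_le
      (measure_mono (subset_inter (subset_iUnion (fun j => M (2 * j)) k) (hMU _ (by omega))))
  · exact (hM _).2.2.trans_le (measure_mono (subset_sdiff.2 ⟨hMU _ (by omega), hodd⟩))
end

section
/- Let μ be the coin-tossing measure on the Cantor space 2^ℕ and fix r ∈ (0,1). There exists a compact set K ⊆ 2^ℕ such that Φ(K) is open, the set Sharp(K) is Π⁰₃-complete, and moreover the set {x ∈ 2^ℕ : D_K(x) = r} is Π⁰₃-complete. (Π⁰₃-complete means: the set is a countable intersection of Fσ sets, and every subset of 2^ℕ that is a countable intersection of Fσ sets is the preimage of it under some continuous function 2^ℕ → 2^ℕ.) -/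
open MeasureTheory Set Filter Topology

/-- The basic clopen cylinder of length `n` around `x` in the Cantor space. -/
def cylinder (x : ℕ → Bool) (n : ℕ) : Set (ℕ → Bool) :=
  {y | ∀ i < n, y i = x i}

/-- The "local measure" ratio `2^n · μ(A ∩ [x↾n])`, whose limit (when it exists) is the
density of `A` at `x` in the Cantor space. -/
noncomputable def densSeq (μ : Measure (ℕ → Bool)) (A : Set (ℕ → Bool))
    (x : ℕ → Bool) (n : ℕ) : ℝ :=
  2 ^ n * (μ (A ∩ cylinder x n)).toReal

/-- A set is `Fσ` iff it is a countable union of closed sets. -/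
def IsFsigma {Y : Type*} [TopologicalSpace Y] (S : Set Y) : Prop :=
  ∃ F : ℕ → Set Y, (∀ n, IsClosed (F n)) ∧ S = ⋃ n, F n

/-- A set is `Π⁰₃` iff it is a countable intersection of `Fσ` sets. -/
def IsPi03 {Y : Type*} [TopologicalSpace Y] (S : Set Y) : Prop :=
  ∃ F : ℕ → Set Y, (∀ n, IsFsigma (F n)) ∧ S = ⋂ n, F n

/-- A subset of the Cantor space is `Π⁰₃`-complete iff it is `Π⁰₃` and every `Π⁰₃` subset
of the Cantor space is its preimage under some continuous self-map of the Cantor space. -/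
def IsPi03Complete (S : Set (ℕ → Bool)) : Prop :=
  IsPi03 S ∧ ∀ T : Set (ℕ → Bool), IsPi03 T →
    ∃ g : (ℕ → Bool) → (ℕ → Bool), Continuous g ∧ T = g ⁻¹' S

/-!
Let `K` be the set of paths of the automaton `step r` (started in `read 0`) that never enter
`dump`. Every state carries a `value` that is the average of the values of its two successors and
equals `1` at `solid` and `0` at `dump`. The difference between the density ratio at `x↾n` and the
value of the state reached after reading `x↾n` therefore averages over the two children as well;
it is dominated by a potential `weight` whose average over the children shrinks by a factor
`7/8`, so it vanishes: the density ratio is the value of the current state.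

Along a path the values either become `1` from some point on (the open set `Φ(K)`), or become `0`,
or follow the doubling map (whose orbits can only converge to `0`), or stay on the spine
`read`/`fork`/`dip`, where the value is `r` except at `dip k`, where it is `r - eps r k`. So the
only possible density in `(0,1)` is `r`. Coding `α : ℕ → ℕ` by the blocks `1^(α n) 0 0 0`, each of
which visits `dip (α n)` once, the density along the code is `r` iff `α → ∞`, and `{α | α → ∞}` is
`Π⁰₃`-hard through the usual counters `firstMeet`.
-/

namespace CantorDensity

open Function

theorem cylinder_eq_piNat (x : ℕ → Bool) (n : ℕ) : cylinder x n = PiNat.cylinder x n := rfl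

theorem cylinder_eq_of_agree {x y : ℕ → Bool} {n : ℕ} (h : ∀ i < n, x i = y i) :
    cylinder x n = cylinder y n :=
  PiNat.mem_cylinder_iff_eq.1 h

theorem isLocallyConstant_of_agree {α β : Type*} [TopologicalSpace α] [DiscreteTopology α]
    {f : (ℕ → α) → β} (n : ℕ) (hf : ∀ x y, (∀ i < n, x i = y i) → f x = f y) :
    IsLocallyConstant f :=
  (IsLocallyConstant.iff_eventually_eq f).2 fun x =>
    mem_of_superset ((PiNat.isOpen_cylinder _ x n).mem_nhds (PiNat.self_mem_cylinder x n))
      fun y hy => (hf x y fun i hi => (hy i hi).symm).symm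

theorem isPi03_setOf_tendsto {X Y : Type*} [TopologicalSpace X] [PseudoMetricSpace Y]
    {f : ℕ → X → Y} (hf : ∀ n, Continuous (f n)) (c : Y) :
    IsPi03 {x | Tendsto (fun n => f n x) atTop (𝓝 c)} := by
  refine ⟨fun q => ⋃ N, ⋂ n ≥ N, {x | dist (f n x) c ≤ 1 / ((q : ℝ) + 1)},
    fun q => ⟨_, fun N => ?_, rfl⟩, ?_⟩
  · exact isClosed_biInter fun n _ => isClosed_le ((hf n).dist continuous_const) continuous_const
  ext x
  simp only [mem_ofPred_eq, mem_iInter, mem_iUnion, Metric.tendsto_atTop]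
  constructor
  · intro h q
    obtain ⟨N, hN⟩ := h _ Nat.one_div_pos_of_nat
    exact ⟨N, fun n hn => (hN n hn).le⟩
  · intro h ε hε
    obtain ⟨q, hq⟩ := exists_nat_one_div_lt hε
    obtain ⟨N, hN⟩ := h q
    exact ⟨N, fun n hn => (hN n hn).trans_lt hq⟩

theorem eq_zero_of_average_of_contracting {E W : (ℕ → Bool) → ℕ → ℝ} {c : ℝ} (hc0 : 0 ≤ c)
    (hc1 : c < 1)
    (hE : ∀ x n, E x n = (E (update x n false) (n + 1) + E (update x n true) (n + 1)) / 2)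
    (hW : ∀ x n, (W (update x n false) (n + 1) + W (update x n true) (n + 1)) / 2 ≤ c * W x n)
    (hEW : ∀ x n, |E x n| ≤ W x n) (x : ℕ → Bool) (n : ℕ) : E x n = 0 := by
  have key : ∀ m x n, |E x n| ≤ c ^ m * W x n := by
    intro m
    induction m with
    | zero => simpa using hEW
    | succ m ih =>
      intro x n
      have h₀ := ih (update x n false) (n + 1)
      have h₁ := ih (update x n true) (n + 1)
      calc |E x n| ≤ (|E (update x n false) (n + 1)| + |E (update x n true) (n + 1)|) / 2 := by
            rw [hE x n, abs_div, abs_two]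
            gcongr
            exact abs_add_le _ _
        _ ≤ c ^ m * ((W (update x n false) (n + 1) + W (update x n true) (n + 1)) / 2) := by
            linarith
        _ ≤ c ^ m * (c * W x n) := by gcongr; exact hW x n
        _ = c ^ (m + 1) * W x n := by ring
  have hlim : Tendsto (fun m => c ^ m * W x n) atTop (𝓝 0) := by
    simpa using (tendsto_pow_atTop_nhds_zero_of_lt_one hc0 hc1).mul_const (W x n)
  exact abs_nonpos_iff.1 (ge_of_tendsto' hlim fun m => key m x n)

def IsCoinTossing (μ : Measure (ℕ → Bool)) : Prop :=
  ∀ (x : ℕ → Bool) (n : ℕ), μ (cylinder x n) = 1 / 2 ^ n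

section Density

variable {μ : Measure (ℕ → Bool)} {K : Set (ℕ → Bool)}

theorem densSeq_congr (μ : Measure (ℕ → Bool)) (K : Set (ℕ → Bool)) {x y : ℕ → Bool} {n : ℕ}
    (h : ∀ i < n, x i = y i) : densSeq μ K x n = densSeq μ K y n := by
  rw [densSeq, densSeq, cylinder_eq_of_agree h]

theorem continuous_densSeq (μ : Measure (ℕ → Bool)) (K : Set (ℕ → Bool)) (n : ℕ) :
    Continuous fun x => densSeq μ K x n :=
  (isLocallyConstant_of_agree n fun _ _ h => densSeq_congr μ K h).continuous

theorem densSeq_nonneg (x : ℕ → Bool) (n : ℕ) : 0 ≤ densSeq μ K x n := by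
  unfold densSeq
  positivity

theorem densSeq_eq_zero_of_disjoint {x : ℕ → Bool} {n : ℕ} (h : Disjoint K (cylinder x n)) :
    densSeq μ K x n = 0 := by
  simp [densSeq, h.inter_eq]

theorem measure_cylinder_ne_top (hμ : IsCoinTossing μ) (x : ℕ → Bool) (n : ℕ) :
    μ (cylinder x n) ≠ ⊤ := by
  simp [hμ x n]

theorem densSeq_eq_one_of_subset (hμ : IsCoinTossing μ) {x : ℕ → Bool} {n : ℕ}
    (h : cylinder x n ⊆ K) : densSeq μ K x n = 1 := by
  simp [densSeq, inter_eq_right.2 h, hμ x n]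

theorem densSeq_le_one (hμ : IsCoinTossing μ) (x : ℕ → Bool) (n : ℕ) : densSeq μ K x n ≤ 1 :=
  calc densSeq μ K x n ≤ densSeq μ univ x n := by
        unfold densSeq
        gcongr
        · simpa using measure_cylinder_ne_top hμ x n
        · exact subset_univ K
    _ = 1 := densSeq_eq_one_of_subset hμ (subset_univ _)

theorem densSeq_eq_average (hμ : IsCoinTossing μ) (hK : MeasurableSet K) (x : ℕ → Bool)
    (n : ℕ) :
    densSeq μ K x n =
      (densSeq μ K (update x n false) (n + 1) + densSeq μ K (update x n true) (n + 1)) / 2 := by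
  have hsplit : cylinder x n =
      cylinder (update x n false) (n + 1) ∪ cylinder (update x n true) (n + 1) := by
    rw [cylinder_eq_piNat, ← PiNat.iUnion_cylinder_update x n, union_comm, union_eq_iUnion]
    congr! 2 with b
    cases b <;> rfl
  have hdisj :
      Disjoint (cylinder (update x n false) (n + 1)) (cylinder (update x n true) (n + 1)) :=
    disjoint_left.2 fun _ h₀ h₁ => by
      simpa using (h₀ n n.lt_succ_self).symm.trans (h₁ n n.lt_succ_self)
  have hfin : ∀ b, μ (K ∩ cylinder (update x n b) (n + 1)) ≠ ⊤ := fun b =>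
    measure_ne_top_of_subset inter_subset_right (measure_cylinder_ne_top hμ _ _)
  rw [densSeq, hsplit, inter_union_distrib_left,
    measure_union (hdisj.mono inter_subset_right inter_subset_right)
      (hK.inter (PiNat.isOpen_cylinder _ _ _).measurableSet),
    ENNReal.toReal_add (hfin false) (hfin true), densSeq, densSeq, pow_succ]
  ring

end Density

section Run

variable {σ : Type*} (δ : σ → Bool → σ) (s₀ : σ)

def run (x : ℕ → Bool) : ℕ → σ
  | 0 => s₀
  | n + 1 => δ (run x n) (x n)

variable {δ s₀}

theorem run_congr {x y : ℕ → Bool} {n : ℕ} (h : ∀ i < n, x i = y i) :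
    run δ s₀ x n = run δ s₀ y n := by
  induction n with
  | zero => rfl
  | succ n ih => simp only [run, ih fun i hi => h i (by omega), h n n.lt_succ_self]

theorem run_update (x : ℕ → Bool) (n : ℕ) (b : Bool) :
    run δ s₀ (update x n b) (n + 1) = δ (run δ s₀ x n) b := by
  rw [run, update_self, run_congr fun i hi => update_of_ne hi.ne _ _]

theorem run_eq_of_absorbing {s : σ} (hs : ∀ b, δ s b = s) {x : ℕ → Bool} {n m : ℕ}
    (hn : run δ s₀ x n = s) (hnm : n ≤ m) : run δ s₀ x m = s := by
  induction m, hnm using Nat.le_induction with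
  | base => exact hn
  | succ m _ ih => rw [run, ih, hs]

theorem isLocallyConstant_run (n : ℕ) : IsLocallyConstant fun x => run δ s₀ x n :=
  isLocallyConstant_of_agree n fun _ _ => run_congr

end Run

noncomputable def doubling (u : ℝ) : ℝ := if u < 1 / 2 then 2 * u else 2 * u - 1

theorem doubling_lt_one {u : ℝ} (hu : u < 1) : doubling u < 1 := by
  unfold doubling
  split_ifs <;> linarith

theorem eq_zero_of_tendsto_iterate_doubling {u L : ℝ} (hu : u < 1)
    (hL : Tendsto (fun n => doubling^[n] u) atTop (𝓝 L)) : L = 0 := by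
  set v := fun n => doubling^[n] u
  have hv : ∀ n, v (n + 1) = doubling (v n) := fun n => iterate_succ_apply' _ _ _
  have hv1 : ∀ n, v n < 1 := fun n => by
    induction n with
    | zero => exact hu
    | succ n ih => rw [hv]; exact doubling_lt_one ih
  -- `2 * v n - v (n + 1)` is the `n`-th binary digit, so the limit is `0` or `1`
  have hdigit : Tendsto (fun n => 2 * v n - v (n + 1)) atTop (𝓝 (2 * L - L)) :=
    (hL.const_mul 2).sub (hL.comp (tendsto_add_atTop_nat 1))
  rw [two_mul, add_sub_cancel_right] at hdigit
  have hL01 : L ∈ ({0, 1} : Set ℝ) :=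
    (toFinite _).isClosed.mem_of_tendsto hdigit <| Eventually.of_forall fun n => by
      rw [hv, doubling]
      split_ifs <;> simp
  rcases hL01 with rfl | rfl
  · rfl
  -- near `1` the doubling map doubles the distance to `1`
  obtain ⟨N, hN⟩ := (hL.eventually (lt_mem_nhds one_half_lt_one)).exists_forall_of_atTop
  have hgrow : ∀ n ≥ N, 1 - v N ≤ 1 - v n := by
    intro n hn
    induction n, hn using Nat.le_induction with
    | base => exact le_rfl
    | succ n hn ih =>
      rw [hv, doubling, if_neg (hN n hn).not_gt]
      linarith [hv1 n]
  have := ge_of_tendsto (tendsto_const_nhds.sub hL) (eventually_atTop.2 ⟨N, hgrow⟩)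
  linarith [hv1 N]

inductive Node
  | read (k : ℕ)
  | fork (k : ℕ)
  | dip (k : ℕ)
  | pay (u : ℝ)
  | solid
  | dump

noncomputable def eps (r : ℝ) (k : ℕ) : ℝ := min r (1 - r) / 2 ^ (k + 1)

noncomputable def step (r : ℝ) : Node → Bool → Node
  | .read k, true => .read (k + 1)
  | .read k, false => .fork k
  | .fork k, true => .pay (r + eps r k)
  | .fork k, false => .dip k
  | .dip k, true => .pay (r - 2 * eps r k)
  | .dip _, false => .read 0
  | .pay u, true => .pay (doubling u)
  | .pay u, false => if u < 1 / 2 then .dump else .solid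
  | .solid, _ => .solid
  | .dump, _ => .dump

noncomputable def value (r : ℝ) : Node → ℝ
  | .read _ | .fork _ => r
  | .dip k => r - eps r k
  | .pay u => u
  | .solid => 1
  | .dump => 0

def weight : Node → ℝ
  | .read _ => 4
  | .fork _ | .dip _ => 3
  | .pay _ => 1
  | .solid | .dump => 0

def Node.Valid : Node → Prop
  | .pay u => 0 ≤ u ∧ u < 1
  | _ => True

noncomputable def trace (r : ℝ) (x : ℕ → Bool) : ℕ → Node := run (step r) (.read 0) x

def survivors (r : ℝ) : Set (ℕ → Bool) := {x | ∀ n, trace r x n ≠ .dump}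

variable {r : ℝ}

section Eps

variable (hr0 : 0 < r) (hr1 : r < 1)
include hr0 hr1

theorem eps_pos (k : ℕ) : 0 < eps r k :=
  div_pos (lt_min hr0 (by linarith)) (by positivity)

theorem two_mul_eps_le (k : ℕ) : 2 * eps r k ≤ min r (1 - r) := by
  rw [eps, pow_succ, ← mul_div_assoc, mul_comm, mul_div_mul_right _ _ two_ne_zero]
  exact div_le_self (le_min hr0.le (by linarith)) (one_le_pow₀ one_le_two)

theorem eps_antitone : Antitone (eps r) := fun j k hjk => by
  have : 0 ≤ min r (1 - r) := le_min hr0.le (by linarith)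
  unfold eps
  gcongr
  exact one_le_two

theorem tendsto_atTop_of_tendsto_eps_comp {α : ℕ → ℕ}
    (h : Tendsto (fun n => eps r (α n)) atTop (𝓝 0)) : Tendsto α atTop atTop := by
  refine tendsto_atTop_atTop.2 fun j => ?_
  obtain ⟨N, hN⟩ := (h.eventually (gt_mem_nhds (eps_pos hr0 hr1 (j + 1)))).exists_forall_of_atTop
  refine ⟨N, fun n hn => ?_⟩
  by_contra! hlt
  exact (hN n hn).not_ge (eps_antitone hr0 hr1 (by omega))

end Eps

theorem tendsto_eps (r : ℝ) : Tendsto (eps r) atTop (𝓝 0) :=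
  tendsto_const_nhds.div_atTop
    ((tendsto_pow_atTop_atTop_of_one_lt one_lt_two).comp (tendsto_add_atTop_nat 1))

theorem value_step (s : Node) :
    value r s = (value r (step r s false) + value r (step r s true)) / 2 := by
  cases s with
  | pay u =>
    by_cases hu : u < 1 / 2 <;> simp only [step, value, doubling, hu, if_true, if_false] <;> ring
  | _ => simp only [step, value]; ring

theorem weight_step (s : Node) :
    (weight (step r s false) + weight (step r s true)) / 2 ≤ 7 / 8 * weight s := by
  cases s with
  | pay u =>
    by_cases hu : u < 1 / 2 <;> simp only [step, weight, hu, if_true, if_false] <;> norm_num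
  | _ => simp only [step, weight]; norm_num

theorem one_le_weight {s : Node} (hsolid : s ≠ .solid) (hdump : s ≠ .dump) : 1 ≤ weight s := by
  cases s <;> simp_all [weight]

theorem step_pay_false (u : ℝ) :
    step r (.pay u) false = .dump ∨ step r (.pay u) false = .solid := by
  simp only [step]
  split_ifs <;> simp

theorem valid_step (hr0 : 0 < r) (hr1 : r < 1) {s : Node} (hs : s.Valid) (b : Bool) :
    (step r s b).Valid := by
  have h₀ := eps_pos hr0 hr1
  have hr : ∀ k, 2 * eps r k ≤ r := fun k => (two_mul_eps_le hr0 hr1 k).trans (min_le_left _ _)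
  have hr' : ∀ k, 2 * eps r k ≤ 1 - r := fun k =>
    (two_mul_eps_le hr0 hr1 k).trans (min_le_right _ _)
  cases s with
  | fork k => cases b <;> simp only [Node.Valid] <;> constructor <;> linarith [h₀ k, hr' k]
  | dip k => cases b <;> simp only [Node.Valid] <;> constructor <;> linarith [h₀ k, hr k]
  | pay u =>
    obtain ⟨hu₀, hu₁⟩ := hs
    cases b
    · rcases step_pay_false (r := r) u with h | h <;> rw [h] <;> trivial
    · simp only [step, Node.Valid, doubling]
      split_ifs <;> constructor <;> linarith
  | _ => cases b <;> trivial

theorem Node.Valid.value_mem_Icc (hr0 : 0 < r) (hr1 : r < 1) {s : Node} (hs : s.Valid) :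
    value r s ∈ Icc 0 1 := by
  cases s with
  | dip k =>
    have := two_mul_eps_le hr0 hr1 k
    have := min_le_left r (1 - r)
    have := eps_pos hr0 hr1 k
    constructor <;> simp only [value] <;> linarith
  | pay u => exact ⟨hs.1, hs.2.le⟩
  | _ => simp only [value, mem_Icc]; constructor <;> linarith

theorem trace_succ (x : ℕ → Bool) (n : ℕ) : trace r x (n + 1) = step r (trace r x n) (x n) := rfl

theorem trace_update (x : ℕ → Bool) (n : ℕ) (b : Bool) :
    trace r (update x n b) (n + 1) = step r (trace r x n) b :=
  run_update x n b

theorem trace_congr {x y : ℕ → Bool} {n : ℕ} (h : ∀ i < n, x i = y i) :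
    trace r x n = trace r y n :=
  run_congr h

theorem valid_trace (hr0 : 0 < r) (hr1 : r < 1) (x : ℕ → Bool) (n : ℕ) : (trace r x n).Valid := by
  induction n with
  | zero => trivial
  | succ n ih => exact valid_step hr0 hr1 ih (x n)

theorem trace_eq_solid_of_le {x : ℕ → Bool} {n m : ℕ} (h : trace r x n = .solid) (hnm : n ≤ m) :
    trace r x m = .solid :=
  run_eq_of_absorbing (fun _ => rfl) h hnm

theorem trace_eq_dump_of_le {x : ℕ → Bool} {n m : ℕ} (h : trace r x n = .dump) (hnm : n ≤ m) :
    trace r x m = .dump :=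
  run_eq_of_absorbing (fun _ => rfl) h hnm

theorem isClosed_survivors : IsClosed (survivors r) := by
  have : survivors r = ⋂ n, {x | trace r x n = .dump}ᶜ := by ext; simp [survivors]
  rw [this]
  exact isClosed_iInter fun n => ((isLocallyConstant_run n).isClopen_fiber _).isOpen.isClosed_compl

theorem cylinder_subset_survivors {x : ℕ → Bool} {n : ℕ} (h : trace r x n = .solid) :
    cylinder x n ⊆ survivors r := by
  intro y hy m hm
  have hyn : trace r y n = .solid := (trace_congr hy).trans h
  rcases le_total n m with hnm | hmn
  · simp [trace_eq_solid_of_le hyn hnm] at hm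
  · simp [trace_eq_dump_of_le hm hmn] at hyn

theorem disjoint_survivors_cylinder {x : ℕ → Bool} {n : ℕ} (h : trace r x n = .dump) :
    Disjoint (survivors r) (cylinder x n) :=
  disjoint_left.2 fun _ hy hyx => hy n ((trace_congr hyx).trans h)

theorem densSeq_survivors_eq_value {μ : Measure (ℕ → Bool)} (hμ : IsCoinTossing μ) (hr0 : 0 < r)
    (hr1 : r < 1) (x : ℕ → Bool) (n : ℕ) :
    densSeq μ (survivors r) x n = value r (trace r x n) := by
  refine sub_eq_zero.1 <| eq_zero_of_average_of_contracting
    (E := fun x n => densSeq μ (survivors r) x n - value r (trace r x n))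
    (W := fun x n => weight (trace r x n)) (by norm_num : (0 : ℝ) ≤ 7 / 8) (by norm_num)
    (fun x n => ?_) (fun x n => ?_) (fun x n => ?_) x n
  · rw [densSeq_eq_average hμ isClosed_survivors.measurableSet, value_step (trace r x n),
      trace_update, trace_update]
    ring
  · simpa only [trace_update] using weight_step (trace r x n)
  · by_cases hsolid : trace r x n = .solid
    · simp [densSeq_eq_one_of_subset hμ (cylinder_subset_survivors hsolid), hsolid, value, weight]
    by_cases hdump : trace r x n = .dump
    · simp [densSeq_eq_zero_of_disjoint (disjoint_survivors_cylinder hdump), hdump, value, weight]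
    have hv := (valid_trace hr0 hr1 x n).value_mem_Icc hr0 hr1
    have hd₀ := densSeq_nonneg (μ := μ) (K := survivors r) x n
    have hd₁ := densSeq_le_one hμ (K := survivors r) x n
    exact (abs_sub_le_iff.2 ⟨by linarith [hv.1], by linarith [hv.2]⟩).trans
      (one_le_weight hsolid hdump)

section Limits

variable {x : ℕ → Bool}

theorem tendsto_value_trace_of_solid {n : ℕ} (h : trace r x n = .solid) :
    Tendsto (fun m => value r (trace r x m)) atTop (𝓝 1) :=
  tendsto_atTop_of_eventually_const (i₀ := n) fun _ hm => by rw [trace_eq_solid_of_le h hm]; rfl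

theorem tendsto_value_trace_of_dump {n : ℕ} (h : trace r x n = .dump) :
    Tendsto (fun m => value r (trace r x m)) atTop (𝓝 0) :=
  tendsto_atTop_of_eventually_const (i₀ := n) fun _ hm => by rw [trace_eq_dump_of_le h hm]; rfl

theorem eq_zero_of_tendsto_of_pay (hr0 : 0 < r) (hr1 : r < 1) {n : ℕ} {u L : ℝ}
    (hpay : trace r x n = .pay u) (hsolid : ∀ m, trace r x m ≠ .solid)
    (hdump : ∀ m, trace r x m ≠ .dump)
    (hL : Tendsto (fun m => value r (trace r x m)) atTop (𝓝 L)) : L = 0 := by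
  have hstay : ∀ m, trace r x (m + n) = .pay (doubling^[m] u) := by
    intro m
    induction m with
    | zero => simpa using hpay
    | succ m ih =>
      have hnext : trace r x (m + 1 + n) = step r (.pay (doubling^[m] u)) (x (m + n)) := by
        rw [add_right_comm, trace_succ, ih]
      cases hb : x (m + n)
      · rw [hb] at hnext
        rcases step_pay_false (r := r) (doubling^[m] u) with h | h
        · exact absurd (hnext.trans h) (hdump _)
        · exact absurd (hnext.trans h) (hsolid _)
      · rw [hnext, hb, iterate_succ_apply']
        rfl
  have hu : u < 1 := by
    have := valid_trace hr0 hr1 x n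
    rw [hpay] at this
    exact this.2
  refine eq_zero_of_tendsto_iterate_doubling hu ?_
  simpa [hstay, value] using (tendsto_add_atTop_iff_nat n).2 hL

theorem frequently_value_trace_eq (hpay : ∀ m u, trace r x m ≠ .pay u)
    (hsolid : ∀ m, trace r x m ≠ .solid) (hdump : ∀ m, trace r x m ≠ .dump) :
    ∃ᶠ m in atTop, value r (trace r x m) = r := by
  refine frequently_atTop.2 fun n => ?_
  cases h : trace r x n with
  | read k | fork k => exact ⟨n, le_rfl, by rw [h]; rfl⟩
  | dip k =>
    refine ⟨n + 1, n.le_succ, ?_⟩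
    cases hb : x n
    · rw [trace_succ, h, hb]
      rfl
    · exact absurd (by rw [trace_succ, h, hb]; rfl) (hpay (n + 1) _)
  | pay u => exact absurd h (hpay n u)
  | solid => exact absurd h (hsolid n)
  | dump => exact absurd h (hdump n)

theorem eq_zero_or_eq_or_exists_solid_of_tendsto (hr0 : 0 < r) (hr1 : r < 1) {L : ℝ}
    (hL : Tendsto (fun n => value r (trace r x n)) atTop (𝓝 L)) :
    L = 0 ∨ L = r ∨ ∃ n, trace r x n = .solid := by
  by_cases hsolid : ∃ n, trace r x n = .solid
  · exact Or.inr (Or.inr hsolid)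
  push Not at hsolid
  by_cases hdump : ∃ n, trace r x n = .dump
  · obtain ⟨n, hn⟩ := hdump
    exact Or.inl (tendsto_nhds_unique hL (tendsto_value_trace_of_dump hn))
  push Not at hdump
  by_cases hpay : ∃ n u, trace r x n = .pay u
  · obtain ⟨n, u, hn⟩ := hpay
    exact Or.inl (eq_zero_of_tendsto_of_pay hr0 hr1 hn hsolid hdump hL)
  push Not at hpay
  exact Or.inr (Or.inl (tendsto_nhds_unique_of_frequently_eq hL tendsto_const_nhds
    (frequently_value_trace_eq hpay hsolid hdump)))

end Limits

section Sets

variable {μ : Measure (ℕ → Bool)}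

theorem setOf_tendsto_densSeq_one (hμ : IsCoinTossing μ) (hr0 : 0 < r) (hr1 : r < 1) :
    {x | Tendsto (densSeq μ (survivors r) x) atTop (𝓝 1)} = ⋃ n, {x | trace r x n = .solid} := by
  ext x
  simp only [mem_ofPred_eq, mem_iUnion, funext (densSeq_survivors_eq_value hμ hr0 hr1 x)]
  refine ⟨fun h => ?_, fun ⟨n, hn⟩ => tendsto_value_trace_of_solid hn⟩
  rcases eq_zero_or_eq_or_exists_solid_of_tendsto hr0 hr1 h with h10 | h1r | hsolid
  · exact absurd h10 one_ne_zero
  · exact absurd h1r hr1.ne'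
  · exact hsolid

theorem isOpen_setOf_tendsto_densSeq_one (hμ : IsCoinTossing μ) (hr0 : 0 < r) (hr1 : r < 1) :
    IsOpen {x | Tendsto (densSeq μ (survivors r) x) atTop (𝓝 1)} := by
  rw [setOf_tendsto_densSeq_one hμ hr0 hr1]
  exact isOpen_iUnion fun n => ((isLocallyConstant_run n).isClopen_fiber _).isOpen

theorem setOf_exists_tendsto_densSeq_eq (hμ : IsCoinTossing μ) (hr0 : 0 < r) (hr1 : r < 1) :
    {x | ∃ v : ℝ, 0 < v ∧ v < 1 ∧ Tendsto (densSeq μ (survivors r) x) atTop (𝓝 v)} =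
      {x | Tendsto (densSeq μ (survivors r) x) atTop (𝓝 r)} := by
  ext x
  simp only [mem_ofPred_eq, funext (densSeq_survivors_eq_value hμ hr0 hr1 x)]
  refine ⟨fun ⟨v, hv0, hv1, h⟩ => ?_, fun h => ⟨r, hr0, hr1, h⟩⟩
  rcases eq_zero_or_eq_or_exists_solid_of_tendsto hr0 hr1 h with rfl | rfl | ⟨n, hn⟩
  · exact absurd hv0 (lt_irrefl 0)
  · exact h
  · exact absurd (tendsto_nhds_unique h (tendsto_value_trace_of_solid hn)) hv1.ne

end Sets

def blockNode (a t : ℕ) : Node := if t ≤ a then .read t else if t = a + 1 then .fork a else .dip a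

-- `encode α` is the concatenation of the blocks `1^(α n) 0 0 0`; position `i` is the letter `t`
-- of block `n`, where `cursor α i = (n, t)`, and there the automaton is in `blockNode (α n) t`.
def cursor (α : ℕ → ℕ) : ℕ → ℕ × ℕ
  | 0 => (0, 0)
  | i + 1 =>
    if (cursor α i).2 < α (cursor α i).1 + 2 then ((cursor α i).1, (cursor α i).2 + 1)
    else ((cursor α i).1 + 1, 0)

def encode (α : ℕ → ℕ) (i : ℕ) : Bool := decide ((cursor α i).2 < α (cursor α i).1)

section Encode

variable {α : ℕ → ℕ}

theorem cursor_snd_le (i : ℕ) : (cursor α i).2 ≤ α (cursor α i).1 + 2 := by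
  cases i with
  | zero => simp [cursor]
  | succ i =>
    rw [cursor]
    split_ifs with h
    · exact h
    · exact Nat.zero_le _

theorem cursor_fst_le (i : ℕ) : (cursor α i).1 ≤ i := by
  induction i with
  | zero => rfl
  | succ i ih =>
    rw [cursor]
    split_ifs <;> dsimp only <;> omega

theorem monotone_cursor_fst : Monotone fun i => (cursor α i).1 :=
  monotone_nat_of_le_succ fun i => by
    rw [cursor]
    split_ifs <;> dsimp only <;> omega

theorem cursor_add {i n : ℕ} (h : cursor α i = (n, 0)) {t : ℕ} (ht : t ≤ α n + 2) :
    cursor α (i + t) = (n, t) := by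
  induction t with
  | zero => exact h
  | succ t ih => simp [cursor, ih (by omega), show t < α n + 2 by omega]

theorem exists_cursor_eq (n : ℕ) : ∃ i, cursor α i = (n, 0) := by
  induction n with
  | zero => exact ⟨0, rfl⟩
  | succ n ih =>
    obtain ⟨i, hi⟩ := ih
    exact ⟨i + (α n + 2) + 1, by rw [cursor, cursor_add hi le_rfl, if_neg (lt_irrefl _)]⟩

theorem tendsto_cursor_fst : Tendsto (fun i => (cursor α i).1) atTop atTop :=
  tendsto_atTop_atTop_of_monotone monotone_cursor_fst fun n =>
    (exists_cursor_eq n).imp fun _ hi => by rw [hi]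

theorem step_blockNode {a t : ℕ} (ht : t ≤ a + 2) :
    step r (blockNode a t) (decide (t < a)) =
      if t < a + 2 then blockNode a (t + 1) else .read 0 := by
  unfold blockNode
  rcases lt_trichotomy t a with h | rfl | h
  · simp [h, h.le, Nat.succ_le_of_lt h, step, show t < a + 2 by omega]
  · simp [step]
  · obtain rfl | rfl : t = a + 1 ∨ t = a + 2 := by omega
    · simp [step]
    · simp [step]

theorem trace_encode (i : ℕ) :
    trace r (encode α) i = blockNode (α (cursor α i).1) (cursor α i).2 := by
  induction i with
  | zero => simp [trace, run, cursor, blockNode]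
  | succ i ih =>
    rw [trace_succ, ih, encode, step_blockNode (cursor_snd_le i), cursor]
    split_ifs <;> simp [blockNode]

theorem dist_value_blockNode_le (hr0 : 0 < r) (hr1 : r < 1) (a t : ℕ) :
    dist (value r (blockNode a t)) r ≤ eps r a := by
  have := eps_pos hr0 hr1 a
  unfold blockNode
  split_ifs <;> simp [value, abs_of_pos this, this.le]

theorem tendsto_value_encode_iff (hr0 : 0 < r) (hr1 : r < 1) :
    Tendsto (fun i => value r (trace r (encode α) i)) atTop (𝓝 r) ↔ Tendsto α atTop atTop := by
  simp only [trace_encode]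
  refine ⟨fun h => ?_, fun h => ?_⟩
  · have hdip : ∀ n, ∃ i, cursor α i = (n, α n + 2) := fun n =>
      (exists_cursor_eq n).elim fun i hi => ⟨i + (α n + 2), cursor_add hi le_rfl⟩
    choose p hp using hdip
    have hp_tendsto : Tendsto p atTop atTop :=
      tendsto_atTop_mono (fun n => by simpa [hp n] using cursor_fst_le (α := α) (p n)) tendsto_id
    refine tendsto_atTop_of_tendsto_eps_comp hr0 hr1 ?_
    have := (tendsto_const_nhds (x := r)).sub (h.comp hp_tendsto)
    simpa [comp_def, hp, blockNode, value] using this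
  · refine tendsto_iff_dist_tendsto_zero.2 (squeeze_zero (fun _ => dist_nonneg)
      (fun i => dist_value_blockNode_le hr0 hr1 _ _) ?_)
    exact (tendsto_eps r).comp (h.comp tendsto_cursor_fst)

theorem cursor_congr {β : ℕ → ℕ} {i : ℕ} (h : ∀ j < i, α j = β j) : cursor α i = cursor β i := by
  induction i with
  | zero => rfl
  | succ i ih =>
    have hi := ih fun j hj => h j (by omega)
    rw [cursor, cursor, hi, h _ (by have := cursor_fst_le (α := β) i; omega)]

theorem continuous_encode : Continuous encode :=
  continuous_pi fun i => (isLocallyConstant_of_agree (i + 1) fun α β h => by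
    rw [encode, encode, cursor_congr fun j hj => h j (by omega),
      h _ (by have := cursor_fst_le (α := β) i; omega)]).continuous

end Encode

section Reduction

open Classical in
noncomputable def firstMeet (C : ℕ → Set (ℕ → Bool)) (x : ℕ → Bool) (n : ℕ) : ℕ :=
  if h : ∃ m, m ≤ n ∧ (C m ∩ cylinder x n).Nonempty then Nat.find h else n + 1

variable {C : ℕ → Set (ℕ → Bool)} {x : ℕ → Bool}

theorem firstMeet_congr {y : ℕ → Bool} {n : ℕ} (h : ∀ i < n, x i = y i) :
    firstMeet C x n = firstMeet C y n := by
  unfold firstMeet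
  rw [cylinder_eq_of_agree h]

theorem firstMeet_le_succ (n : ℕ) : firstMeet C x n ≤ n + 1 := by
  classical
  unfold firstMeet
  split_ifs with h
  · exact (Nat.find_spec h).1.trans n.le_succ
  · exact le_rfl

theorem firstMeet_le {m n : ℕ} (hmn : m ≤ n) (hm : (C m ∩ cylinder x n).Nonempty) :
    firstMeet C x n ≤ m := by
  classical
  rw [firstMeet, dif_pos ⟨m, hmn, hm⟩]
  exact Nat.find_min' _ ⟨hmn, hm⟩

theorem nonempty_of_firstMeet_le {n : ℕ} (h : firstMeet C x n ≤ n) :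
    (C (firstMeet C x n) ∩ cylinder x n).Nonempty := by
  classical
  unfold firstMeet at *
  split_ifs at * with hex
  · exact (Nat.find_spec hex).2
  · omega

theorem monotone_firstMeet : Monotone (firstMeet C x) := by
  refine monotone_nat_of_le_succ fun n => ?_
  by_cases h : firstMeet C x (n + 1) ≤ n
  · have hne := nonempty_of_firstMeet_le (C := C) (x := x) (n := n + 1) (by omega)
    exact firstMeet_le h (hne.mono (inter_subset_inter_right _ (PiNat.cylinder_anti x n.le_succ)))
  · exact (firstMeet_le_succ n).trans (not_le.1 h)

theorem mem_iUnion_iff_eventually_firstMeet (hC : ∀ m, IsClosed (C m)) :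
    x ∈ ⋃ m, C m ↔ ∀ᶠ n in atTop, firstMeet C x (n + 1) = firstMeet C x n := by
  constructor
  · rintro ⟨_, ⟨m, rfl⟩, hm⟩
    have hbdd : BddAbove (range (firstMeet C x)) := ⟨m, by
      rintro _ ⟨n, rfl⟩
      rcases le_or_gt m n with hmn | hnm
      · exact firstMeet_le hmn ⟨x, hm, PiNat.self_mem_cylinder x n⟩
      · exact (firstMeet_le_succ n).trans hnm⟩
    have hconst := tendsto_atTop_ciSup monotone_firstMeet hbdd
    rw [nhds_discrete, tendsto_pure] at hconst
    filter_upwards [hconst, (tendsto_add_atTop_nat 1).eventually hconst] with n h₀ h₁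
    rw [h₀, h₁]
  · intro h
    obtain ⟨N, hN⟩ := h.exists_forall_of_atTop
    set M := firstMeet C x N
    have hM : ∀ n ≥ N, firstMeet C x n = M := fun n hn => by
      induction n, hn using Nat.le_induction with
      | base => rfl
      | succ n hn ih => rw [hN n hn, ih]
    have hmeet : ∀ n, (C M ∩ cylinder x n).Nonempty := fun n => by
      have h' := hM (max n (max N M)) (by omega)
      refine (h' ▸ nonempty_of_firstMeet_le (by omega)).mono ?_
      exact inter_subset_inter_right _ (PiNat.cylinder_anti x (by omega))
    by_contra hx
    obtain ⟨n, hn⟩ :=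
      PiNat.exists_disjoint_cylinder (hC M) fun hxM => hx (mem_iUnion.2 ⟨M, hxM⟩)
    exact (hmeet n).ne_empty hn.inter_eq

open Classical in
noncomputable def leastBelow (p : ℕ → ℕ → Prop) (n : ℕ) : ℕ :=
  if h : ∃ k, k ≤ n ∧ p n k then Nat.find h else n

theorem leastBelow_congr {p q : ℕ → ℕ → Prop} {n : ℕ} (h : p n = q n) :
    leastBelow p n = leastBelow q n := by
  unfold leastBelow
  rw [h]

theorem tendsto_leastBelow_iff {p : ℕ → ℕ → Prop} :
    Tendsto (leastBelow p) atTop atTop ↔ ∀ k, ∀ᶠ n in atTop, ¬ p n k := by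
  classical
  constructor
  · intro h k
    by_contra hk
    obtain ⟨n, hpn, hn⟩ := (not_eventually.1 hk |>.and_eventually
      ((h.eventually_gt_atTop k).and (eventually_ge_atTop k))).exists
    have hle : leastBelow p n ≤ k := by
      rw [leastBelow, dif_pos ⟨k, hn.2, not_not.1 hpn⟩]
      exact Nat.find_min' _ ⟨hn.2, not_not.1 hpn⟩
    exact hle.not_gt hn.1
  · intro h
    refine tendsto_atTop_atTop.2 fun j => ?_
    obtain ⟨N, hN⟩ :=
      ((eventually_all_finset (Finset.range j)).2 fun k _ => h k).exists_forall_of_atTop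
    refine ⟨max N j, fun n hn => ?_⟩
    unfold leastBelow
    split_ifs with hex
    · exact (Nat.le_find_iff _ _).2 fun k hk hpk =>
        hN n (by omega) k (Finset.mem_range.2 hk) hpk.2
    · omega

-- `A x n` is the least `k ≤ n` whose counter `firstMeet (C k) x` moves at time `n`; it tends to
-- infinity iff every counter eventually stops moving.
theorem _root_.IsPi03.exists_continuous_tendsto_atTop_iff {T : Set (ℕ → Bool)} (hT : IsPi03 T) :
    ∃ A : (ℕ → Bool) → ℕ → ℕ, Continuous A ∧ ∀ x, x ∈ T ↔ Tendsto (A x) atTop atTop := by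
  obtain ⟨F, hF, rfl⟩ := hT
  choose C hC hFC using hF
  refine ⟨fun x => leastBelow fun n k => firstMeet (C k) x (n + 1) ≠ firstMeet (C k) x n,
    continuous_pi fun n => (isLocallyConstant_of_agree (n + 1) fun x y h => ?_).continuous,
    fun x => ?_⟩
  · have h₀ : ∀ k, firstMeet (C k) x n = firstMeet (C k) y n :=
      fun k => firstMeet_congr fun i hi => h i (by omega)
    have h₁ : ∀ k, firstMeet (C k) x (n + 1) = firstMeet (C k) y (n + 1) :=
      fun k => firstMeet_congr h
    exact leastBelow_congr (funext fun k => by rw [h₀, h₁])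
  · simp only [mem_iInter, hFC, mem_iUnion_iff_eventually_firstMeet (hC _), tendsto_leastBelow_iff,
      not_not]

end Reduction

theorem isPi03Complete_setOf_tendsto_densSeq {μ : Measure (ℕ → Bool)} (hμ : IsCoinTossing μ)
    (hr0 : 0 < r) (hr1 : r < 1) :
    IsPi03Complete {x | Tendsto (densSeq μ (survivors r) x) atTop (𝓝 r)} := by
  refine ⟨isPi03_setOf_tendsto (continuous_densSeq μ _) r, fun T hT => ?_⟩
  obtain ⟨A, hA, hTA⟩ := hT.exists_continuous_tendsto_atTop_iff
  refine ⟨encode ∘ A, continuous_encode.comp hA, ext fun x => ?_⟩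
  rw [hTA, mem_preimage, comp_apply, mem_ofPred_eq,
    funext (densSeq_survivors_eq_value hμ hr0 hr1 _), tendsto_value_encode_iff hr0 hr1]

end CantorDensity

/-- **A compact set whose sharp points form a `Π⁰₃`-complete set.** Let `μ` be the
coin-tossing measure on the Cantor space and fix `r ∈ (0,1)`. There is a compact
`K ⊆ 2^ℕ` such that `Φ(K)` is open, `Sharp(K)` is `Π⁰₃`-complete, and moreover
`{x | D_K(x) = r}` is `Π⁰₃`-complete. -/
theorem stmt_13 (μ : Measure (ℕ → Bool))
    (hμ : ∀ (x : ℕ → Bool) (n : ℕ), μ (cylinder x n) = 1 / 2 ^ n)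
    (r : ℝ) (hr0 : 0 < r) (hr1 : r < 1) :
    ∃ K : Set (ℕ → Bool), IsCompact K ∧
      IsOpen {x | Tendsto (densSeq μ K x) atTop (𝓝 1)} ∧
      IsPi03Complete {x | ∃ v : ℝ, 0 < v ∧ v < 1 ∧ Tendsto (densSeq μ K x) atTop (𝓝 v)} ∧
      IsPi03Complete {x | Tendsto (densSeq μ K x) atTop (𝓝 r)} := by
  refine ⟨CantorDensity.survivors r, CantorDensity.isClosed_survivors.isCompact,
    CantorDensity.isOpen_setOf_tendsto_densSeq_one hμ hr0 hr1, ?_,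
    CantorDensity.isPi03Complete_setOf_tendsto_densSeq hμ hr0 hr1⟩
  rw [CantorDensity.setOf_exists_tendsto_densSeq_eq hμ hr0 hr1]
  exact CantorDensity.isPi03Complete_setOf_tendsto_densSeq hμ hr0 hr1
end

section
/- Let (X,d) be a metric space with a fully supported, locally finite, tight Borel measure μ, and assume (X,d,μ) is amenable: there are functions εₙ : X → (0,∞) such that for each x the sequence (εₙ(x)) is strictly decreasing to 0 with 0 < μ(B(x,εₙ(x))) < ∞, for every measurable E and every x one has limsup_{n} μ(E ∩ B(x,εₙ(x)))/μ(B(x,εₙ(x))) = limsup_{ε→0⁺} μ(E ∩ B(x,ε))/μ(B(x,ε)), and for each n the map x ↦ B(x,εₙ(x)) is continuous into the measure algebra, i.e. for every x and η > 0 there is δ > 0 such that d(x,x') < δ implies μ(B(x,εₙ(x)) △ B(x',εₙ(x'))) < η. If A ⊆ X is measurable and solid (D_A(x) exists for every x), then the function D_A : X → [0,1] is of Baire class 1: the preimage of every open subset of [0,1] is a countable union of closed subsets of X (an Fσ set). -/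
/-!
Write `fₙ(x) = μ(A ∩ B(x,εₙ(x))) / μ(B(x,εₙ(x)))`. Continuity of `x ↦ B(x,εₙ(x))` into the
measure algebra makes every `fₙ` continuous. Amenability turns the limsup of `fₙ(x)` into the
limsup over all radii, which is `D(x)`; applied to `Aᶜ`, whose density is `1 - D(x)`, it gives
the liminf as well. So `D` is a pointwise limit of continuous functions, hence of Baire class 1.
-/

open MeasureTheory Metric Set Filter Topology
open scoped symmDiff ENNReal

section MeasureAlgebra

variable {Y : Type*} [MeasurableSpace Y] (μ : Measure Y)

lemma measure_inter_le_add_symmDiff (E B B' : Set Y) :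
    μ (E ∩ B) ≤ μ (E ∩ B') + μ (B ∆ B') := by
  refine (measure_mono ?_).trans (measure_union_le _ _)
  rintro y ⟨hyE, hyB⟩
  by_cases hyB' : y ∈ B'
  · exact Or.inl ⟨hyE, hyB'⟩
  · exact Or.inr (Or.inl ⟨hyB, hyB'⟩)

lemma abs_toReal_measure_inter_sub_le (E : Set Y) {B B' : Set Y} (hB : μ B ≠ ∞)
    (hB' : μ B' ≠ ∞) :
    |(μ (E ∩ B)).toReal - (μ (E ∩ B')).toReal| ≤ (μ (B ∆ B')).toReal := by
  have hEB : μ (E ∩ B) ≠ ∞ := (measure_lt_top_of_subset inter_subset_right hB).ne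
  have hEB' : μ (E ∩ B') ≠ ∞ := (measure_lt_top_of_subset inter_subset_right hB').ne
  have hBB' : μ (B ∆ B') ≠ ∞ := measure_symmDiff_ne_top hB hB'
  have h₁ := ENNReal.toReal_mono (by finiteness) (measure_inter_le_add_symmDiff μ E B B')
  have h₂ := ENNReal.toReal_mono (by finiteness) (measure_inter_le_add_symmDiff μ E B' B)
  rw [ENNReal.toReal_add hEB' hBB'] at h₁
  rw [symmDiff_comm, ENNReal.toReal_add hEB hBB'] at h₂
  exact abs_sub_le_iff.2 ⟨by linarith, by linarith⟩

lemma continuous_toReal_measure_inter {X : Type*} [PseudoMetricSpace X] {B : X → Set Y}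
    (hfin : ∀ x, μ (B x) ≠ ∞)
    (hB : ∀ x, ∀ η : ℝ, 0 < η → ∃ δ > (0 : ℝ), ∀ x', dist x x' < δ →
      μ (B x ∆ B x') < ENNReal.ofReal η)
    (E : Set Y) : Continuous fun x => (μ (E ∩ B x)).toReal := by
  refine Metric.continuous_iff.2 fun x η hη => ?_
  obtain ⟨δ, hδ, hclose⟩ := hB x η hη
  refine ⟨δ, hδ, fun x' hx' => ?_⟩
  calc dist (μ (E ∩ B x')).toReal (μ (E ∩ B x)).toReal
      ≤ (μ (B x' ∆ B x)).toReal := abs_toReal_measure_inter_sub_le μ E (hfin x') (hfin x)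
    _ < η := by
      rw [symmDiff_comm]
      exact ENNReal.toReal_lt_of_lt_ofReal (hclose x' (by rwa [dist_comm]))

lemma toReal_measure_compl_inter_div {A B : Set Y} (hA : MeasurableSet A) (hB₀ : μ B ≠ 0)
    (hB : μ B ≠ ∞) :
    (μ (Aᶜ ∩ B)).toReal / (μ B).toReal = 1 - (μ (A ∩ B)).toReal / (μ B).toReal := by
  have hsplit : μ (Aᶜ ∩ B) + μ (A ∩ B) = μ B := by
    rw [inter_comm Aᶜ, ← sdiff_eq, inter_comm A]
    exact measure_sdiff_add_inter B hA
  have hB_pos : (μ B).toReal ≠ 0 := ENNReal.toReal_ne_zero.2 ⟨hB₀, hB⟩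
  rw [eq_sub_iff_add_eq, ← add_div, div_eq_one_iff_eq hB_pos,
    ← ENNReal.toReal_add (by finiteness) (by finiteness), hsplit]

lemma toReal_measure_inter_div_mem_Icc (A : Set Y) {B : Set Y} (hB : μ B ≠ ∞) :
    (μ (A ∩ B)).toReal / (μ B).toReal ∈ Icc (0 : ℝ) 1 :=
  ⟨by positivity, div_le_one_of_le₀ (ENNReal.toReal_mono hB (measure_mono inter_subset_right))
    ENNReal.toReal_nonneg⟩

end MeasureAlgebra

lemma HasDensity.compl {X : Type*} [MetricSpace X] [MeasurableSpace X] {μ : Measure X}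
    [IsLocallyFiniteMeasure μ] [μ.IsOpenPosMeasure] {A : Set X} (hA : MeasurableSet A)
    {x : X} {v : ℝ} (h : HasDensity μ A x v) : HasDensity μ Aᶜ x (1 - v) := by
  obtain ⟨s, hs, hs_fin⟩ := μ.finiteAt_nhds x
  have hfin : ∀ᶠ e in 𝓝[>] (0 : ℝ), μ (ball x e) ≠ ∞ :=
    ((eventually_ball_subset hs).filter_mono nhdsWithin_le_nhds).mono fun e he =>
      (measure_lt_top_of_subset he hs_fin.ne).ne
  have hpos : ∀ᶠ e in 𝓝[>] (0 : ℝ), μ (ball x e) ≠ 0 :=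
    eventually_mem_nhdsWithin.mono fun e he => (measure_ball_pos μ x he).ne'
  refine (tendsto_const_nhds.sub h).congr' ?_
  filter_upwards [hfin, hpos] with e he_fin he_pos
  exact (toReal_measure_compl_inter_div μ hA he_pos he_fin).symm

lemma tendsto_of_limsup_eq_of_limsup_one_sub {ι : Type*} {l : Filter ι} [l.NeBot] {u : ι → ℝ}
    {a : ℝ} (hu : ∀ i, u i ∈ Icc (0 : ℝ) 1) (hsup : limsup u l = a)
    (hsup_compl : limsup (fun i => 1 - u i) l = 1 - a) : Tendsto u l (𝓝 a) := by
  have hle : l.IsBoundedUnder (· ≤ ·) u := isBoundedUnder_of ⟨1, fun i => (hu i).2⟩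
  have hge : l.IsBoundedUnder (· ≥ ·) u := isBoundedUnder_of ⟨0, fun i => (hu i).1⟩
  have hinf : liminf u l = a := by
    have := limsup_const_sub l u 1 hle.isCoboundedUnder_ge hge
    linarith
  exact tendsto_of_liminf_eq_limsup hinf hsup hle hge

lemma IsOpen.exists_isClosed_nhds_cover {Y : Type*} [PseudoMetricSpace Y] {U : Set Y}
    (hU : IsOpen U) :
    ∃ C : ℕ → Set Y, (∀ m, IsClosed (C m)) ∧ (∀ m, C m ⊆ U) ∧ ∀ y ∈ U, ∃ m, C m ∈ 𝓝 y := by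
  refine ⟨fun m => (thickening (1 / (m + 1 : ℝ)) Uᶜ)ᶜ, fun m => isOpen_thickening.isClosed_compl,
    fun m => compl_subset_comm.1 (self_subset_thickening (by positivity) _), fun y hy => ?_⟩
  obtain ⟨r, hr, hball⟩ := Metric.isOpen_iff.1 hU y hy
  obtain ⟨m, hm⟩ := exists_nat_one_div_lt (half_pos hr)
  refine ⟨m, mem_of_superset (ball_mem_nhds y (half_pos hr)) fun w hw hw_thick => ?_⟩
  obtain ⟨z, hzU, hwz⟩ := mem_thickening_iff.1 hw_thick
  refine hzU (hball ?_)
  calc dist z y ≤ dist w z + dist w y := dist_triangle_left z y w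
    _ < r := by rw [mem_ball] at hw; linarith

lemma exists_isClosed_iUnion_eq_preimage_of_tendsto {X Y : Type*} [TopologicalSpace X]
    [PseudoMetricSpace Y] {f : ℕ → X → Y} (hf : ∀ n, Continuous (f n)) {g : X → Y}
    (hlim : ∀ x, Tendsto (fun n => f n x) atTop (𝓝 (g x))) {U : Set Y} (hU : IsOpen U) :
    ∃ F : ℕ → Set X, (∀ n, IsClosed (F n)) ∧ g ⁻¹' U = ⋃ n, F n := by
  obtain ⟨C, hC_closed, hC_sub, hC_nhds⟩ := hU.exists_isClosed_nhds_cover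
  set G : ℕ → ℕ → Set X := fun m N => ⋂ n ≥ N, f n ⁻¹' C m
  refine ⟨fun k => G k.unpair.1 k.unpair.2, fun k => isClosed_biInter fun n _ =>
    (hC_closed _).preimage (hf n), ?_⟩
  rw [iUnion_unpair]
  ext x
  simp only [mem_preimage, mem_iUnion, G, mem_iInter]
  constructor
  · intro hx
    obtain ⟨m, hm⟩ := hC_nhds _ hx
    obtain ⟨N, hN⟩ := eventually_atTop.1 (hlim x hm)
    exact ⟨m, N, hN⟩
  · rintro ⟨m, N, hx⟩
    exact hC_sub m ((hC_closed m).mem_of_tendsto (hlim x) (eventually_atTop.2 ⟨N, hx⟩))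

theorem stmt_18_general {X : Type*} [MetricSpace X] [MeasurableSpace X]
    (μ : Measure X) [IsLocallyFiniteMeasure μ]
    (hfs : ∀ U : Set X, IsOpen U → U.Nonempty → 0 < μ U)
    -- amenability data
    (ε : ℕ → X → ℝ)
    (hballpos : ∀ n x, 0 < μ (ball x (ε n x)))
    (hballfin : ∀ n x, μ (ball x (ε n x)) < ⊤)
    (hstrong : ∀ E : Set X, MeasurableSet E → ∀ x : X,
      limsup (fun n =>
          (μ (E ∩ ball x (ε n x))).toReal / (μ (ball x (ε n x))).toReal) atTop =
      limsup (fun e : ℝ => (μ (E ∩ ball x e)).toReal / (μ (ball x e)).toReal)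
        (𝓝[>] (0 : ℝ)))
    (hcontball : ∀ (n : ℕ) (x : X), ∀ η : ℝ, 0 < η → ∃ δ > (0 : ℝ), ∀ x' : X,
      dist x x' < δ → μ (ball x (ε n x) ∆ ball x' (ε n x')) < ENNReal.ofReal η)
    -- a solid measurable set with density function `D`
    (A : Set X) (hA : MeasurableSet A)
    (D : X → ℝ) (hD : ∀ x : X, HasDensity μ A x (D x)) :
    ∀ U : Set ℝ, IsOpen U →
      ∃ F : ℕ → Set X, (∀ n, IsClosed (F n)) ∧ D ⁻¹' U = ⋃ n, F n := by
  have : μ.IsOpenPosMeasure := ⟨fun U hU hne => (hfs U hU hne).ne'⟩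
  have hfin n x : μ (ball x (ε n x)) ≠ ∞ := (hballfin n x).ne
  set f : ℕ → X → ℝ := fun n x => (μ (A ∩ ball x (ε n x))).toReal / (μ (ball x (ε n x))).toReal
  have hf_cont n : Continuous (f n) := by
    have hball := continuous_toReal_measure_inter μ (hfin n) (hcontball n) univ
    simp only [univ_inter] at hball
    exact (continuous_toReal_measure_inter μ (hfin n) (hcontball n) A).div hball fun x =>
      ENNReal.toReal_ne_zero.2 ⟨(hballpos n x).ne', hfin n x⟩
  have hf_lim x : Tendsto (fun n => f n x) atTop (𝓝 (D x)) := by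
    refine tendsto_of_limsup_eq_of_limsup_one_sub
      (fun n => toReal_measure_inter_div_mem_Icc μ A (hfin n x)) ?_ ?_
    · rw [hstrong A hA x]
      exact (hD x).limsup_eq
    · rw [← ((hD x).compl hA).limsup_eq, ← hstrong Aᶜ hA.compl x]
      simp only [f, toReal_measure_compl_inter_div μ hA (hballpos _ x).ne' (hfin _ x)]
  exact fun U hU => exists_isClosed_iUnion_eq_preimage_of_tendsto hf_cont hf_lim hU

/-- **In an amenable space the density function of a solid set is of Baire class 1.**
Let `μ` be a fully supported, locally finite, tight Borel measure on a metric space `X`,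
and assume `(X,d,μ)` is amenable, as witnessed by functions `εₙ : X → (0,∞)`. If `A` is
measurable and solid, with density function `D`, then the preimage under `D` of every open
set is `Fσ`. -/
theorem stmt_18 {X : Type*} [MetricSpace X] [MeasurableSpace X] [BorelSpace X]
    (μ : Measure X) [IsLocallyFiniteMeasure μ]
    (hfs : ∀ U : Set X, IsOpen U → U.Nonempty → 0 < μ U)
    (htight : ∀ E : Set X, MeasurableSet E → ∀ r : ℝ≥0∞, r < μ E →
      ∃ K : Set X, IsCompact K ∧ K ⊆ E ∧ r < μ K)
    -- amenability data
    (ε : ℕ → X → ℝ)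
    (hεpos : ∀ n x, 0 < ε n x)
    (hεanti : ∀ x, StrictAnti fun n => ε n x)
    (hεlim : ∀ x, Tendsto (fun n => ε n x) atTop (𝓝 0))
    (hballpos : ∀ n x, 0 < μ (ball x (ε n x)))
    (hballfin : ∀ n x, μ (ball x (ε n x)) < ⊤)
    (hstrong : ∀ E : Set X, MeasurableSet E → ∀ x : X,
      limsup (fun n =>
          (μ (E ∩ ball x (ε n x))).toReal / (μ (ball x (ε n x))).toReal) atTop =
      limsup (fun e : ℝ => (μ (E ∩ ball x e)).toReal / (μ (ball x e)).toReal)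
        (𝓝[>] (0 : ℝ)))
    (hcontball : ∀ (n : ℕ) (x : X), ∀ η : ℝ, 0 < η → ∃ δ > (0 : ℝ), ∀ x' : X,
      dist x x' < δ → μ (ball x (ε n x) ∆ ball x' (ε n x')) < ENNReal.ofReal η)
    -- a solid measurable set with density function `D`
    (A : Set X) (hA : MeasurableSet A)
    (D : X → ℝ) (hD : ∀ x : X, HasDensity μ A x (D x)) :
    ∀ U : Set ℝ, IsOpen U →
      ∃ F : ℕ → Set X, (∀ n, IsClosed (F n)) ∧ D ⁻¹' U = ⋃ n, F n :=
  stmt_18_general μ hfs ε hballpos hballfin hstrong hcontball A hA D hD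
end
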